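/- arXiv:1108.1301 — 2 statements merged into one kernel-verified Lean document; each statement's English description precedes it below -/
import Mathlib

section
/- Let ≺₂ be the position-over-term extension of ≺₁, let G be a finite set of labeled polynomials of I with f_i^[e_i] ∈ G for i = 1,…,m, and let f^[u] be a labeled polynomial of I. If for every critical pair (t_g, g^[v], t_h, h^[w]) of G with lpp(u) ⪰ lpp(t_g·v), the S-polynomial of that critical pair has a standard representation with respect to G, then f^[u] has a standard representation with respect to G. -/
open MvPolynomial

noncomputable section

/-- Power products of `K[x₁,…,xₙ]`, recorded by their exponent vectors
(so `x^α ∣ x^β` is `α ≤ β` and `x^α · x^β` is `α + β`). -/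
abbrev PP (n : ℕ) := Fin n →₀ ℕ

/-- Module terms `x^α • eᵢ` of the free module `R^m`. -/
abbrev MTerm (n m : ℕ) := PP n × Fin m

/-- Multiplication of a module term by a power product. -/
def mtmul {n m : ℕ} (γ : PP n) (t : MTerm n m) : MTerm n m := (γ + t.1, t.2)

/-- A monomial order `≺₁` on the power products of `K[x₁,…,xₙ]`. -/
structure MonOrd (n : ℕ) where
  ord : LinearOrder (PP n)
  mul_lt : ∀ γ a b : PP n, ord.lt a b → ord.lt (γ + a) (γ + b)
  one_le : ∀ a : PP n, ord.le 0 a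
  wf : WellFounded ord.lt

/-- A term order `≺₂` on the module terms of `R^m`: a well-order compatible with
multiplication by power products. -/
structure ModOrd (n m : ℕ) where
  ord : LinearOrder (MTerm n m)
  mul_lt : ∀ (γ : PP n) (a b : MTerm n m), ord.lt a b → ord.lt (mtmul γ a) (mtmul γ b)
  wf : WellFounded ord.lt

variable {K : Type*} [Field K] {n m : ℕ}

/-- Elements of the free module `R^m`. -/
abbrev ModElem (K : Type*) [Field K] (n m : ℕ) := Fin m → MvPolynomial (Fin n) K

/-- `u · F = u₁f₁ + … + u_m f_m`. -/
def dotF (u : ModElem K n m) (F : Fin m → MvPolynomial (Fin n) K) : MvPolynomial (Fin n) K :=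
  ∑ i, u i * F i

/-- Leading power product of a polynomial, valued in `WithBot` so that `lppW 0 = ⊥`
(the convention `lpp 0 = 0 ≺ t` for all terms `t`). -/
def lppW (o : MonOrd n) (f : MvPolynomial (Fin n) K) : WithBot (PP n) :=
  @Finset.max (PP n) o.ord f.support

/-- Leading power product of a (nonzero) polynomial. -/
def lpp (o : MonOrd n) (f : MvPolynomial (Fin n) K) : PP n :=
  (lppW o f).unbotD 0

/-- Leading coefficient of a polynomial (`lc 0 = 0`). -/
def lc (o : MonOrd n) (f : MvPolynomial (Fin n) K) : K := f.coeff (lpp o f)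

/-- The set of module terms occurring in a module element. -/
def msupport (u : ModElem K n m) : Finset (MTerm n m) :=
  Finset.univ.biUnion fun i => (u i).support.image fun α => (α, i)

/-- Leading module term (signature) of a module element, `⊥` for the zero element. -/
def lppMW (o : ModOrd n m) (u : ModElem K n m) : WithBot (MTerm n m) :=
  @Finset.max (MTerm n m) o.ord (msupport u)

/-- Coefficient of a module element at a module term. -/
def mcoeff (u : ModElem K n m) (t : MTerm n m) : K := (u t.2).coeff t.1

/-- Leading coefficient of a module element (`0` for the zero element). -/
def lcM (o : ModOrd n m) (u : ModElem K n m) : K :=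
  WithBot.recBotCoe 0 (fun t => mcoeff u t) (lppMW o u)

/-- `⪯` on `WithBot`-valued leading power products w.r.t. `≺₁`. -/
def wbleP (o : MonOrd n) (a b : WithBot (PP n)) : Prop :=
  @LE.le (WithBot (PP n)) (@WithBot.instLE (PP n) o.ord.toLE) a b
/-- `≺` on `WithBot`-valued leading power products w.r.t. `≺₁`. -/
def wbltP (o : MonOrd n) (a b : WithBot (PP n)) : Prop :=
  @LT.lt (WithBot (PP n)) (@WithBot.instLT (PP n) o.ord.toLT) a b
/-- `⪯` on `WithBot`-valued signatures w.r.t. `≺₂`. -/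
def wbleM (o : ModOrd n m) (a b : WithBot (MTerm n m)) : Prop :=
  @LE.le (WithBot (MTerm n m)) (@WithBot.instLE (MTerm n m) o.ord.toLE) a b
/-- `≺` on `WithBot`-valued signatures w.r.t. `≺₂`. -/
def wbltM (o : ModOrd n m) (a b : WithBot (MTerm n m)) : Prop :=
  @LT.lt (WithBot (MTerm n m)) (@WithBot.instLT (MTerm n m) o.ord.toLT) a b

/-- Multiplication of a module element by a power product `x^t`. -/
def smulPP (t : PP n) (u : ModElem K n m) : ModElem K n m := fun k => monomial t (1 : K) * u k

/-- Multiplication of a module element by a polynomial. -/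
def pmul (p : MvPolynomial (Fin n) K) (u : ModElem K n m) : ModElem K n m := fun k => p * u k

/-- The `j`-th standard basis vector `e_j` of `R^m`. -/
def eVec (j : Fin m) : ModElem K n m := fun k => if k = j then 1 else 0

/-- The module element `c · x^α · e_j`. -/
def termVec (α : PP n) (c : K) (j : Fin m) : ModElem K n m :=
  fun k => if k = j then monomial α c else 0

/-- `G = {g₁^[v₁], …, g_s^[v_s]}` is a full-labeled Gröbner basis for `I = ⟨F⟩`:
each `gᵢ = vᵢ · F`, and for every labeled polynomial `f^[u]` of `I` with `f ≠ 0`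
there is `i` with `lpp(gᵢ) ∣ lpp(f)` and `lpp(t·vᵢ) ⪯ lpp(u)`, `t = lpp(f)/lpp(gᵢ)`. -/
def IsFullLGB (o1 : MonOrd n) (o2 : ModOrd n m) (F : Fin m → MvPolynomial (Fin n) K)
    {s : ℕ} (g : Fin s → MvPolynomial (Fin n) K) (v : Fin s → ModElem K n m) : Prop :=
  (∀ i, g i = dotF (v i) F) ∧
  ∀ (f : MvPolynomial (Fin n) K) (u : ModElem K n m), f = dotF u F → f ≠ 0 →
    ∃ i, g i ≠ 0 ∧ lpp o1 (g i) ≤ lpp o1 f ∧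
      wbleM o2 (lppMW o2 (smulPP (lpp o1 f - lpp o1 (g i)) (v i))) (lppMW o2 u)

/-- `S = {g₁^(t₁), …, g_s^(t_s)}` is a signature-labeled Gröbner basis for `I = ⟨F⟩`. -/
def IsSigLGB (o1 : MonOrd n) (o2 : ModOrd n m) (F : Fin m → MvPolynomial (Fin n) K)
    {s : ℕ} (g : Fin s → MvPolynomial (Fin n) K) (t : Fin s → MTerm n m) : Prop :=
  ∃ v : Fin s → ModElem K n m, (∀ i, lppMW o2 (v i) = (t i : WithBot (MTerm n m))) ∧
    IsFullLGB o1 o2 F g v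

/-- `g^[v]` is a standard form of the module term `T` in `I = ⟨F⟩`. -/
def IsStdForm (o1 : MonOrd n) (o2 : ModOrd n m) (F : Fin m → MvPolynomial (Fin n) K)
    (T : MTerm n m) (g : MvPolynomial (Fin n) K) (v : ModElem K n m) : Prop :=
  g = dotF v F ∧ lppMW o2 v = (T : WithBot (MTerm n m)) ∧
  ∀ (f : MvPolynomial (Fin n) K) (u : ModElem K n m), f = dotF u F →
    lppMW o2 u = (T : WithBot (MTerm n m)) → wbleP o1 (lppW o1 g) (lppW o1 f)

/-- `≺₂` is the position-over-term extension of `≺₁`: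
`x^α eᵢ ≺₂ x^β e_j` iff `i > j`, or `i = j` and `x^α ≺₁ x^β`. -/
def IsPOT (o1 : MonOrd n) (o2 : ModOrd n m) : Prop :=
  ∀ a b : MTerm n m, o2.ord.lt a b ↔ (b.2 < a.2 ∨ (a.2 = b.2 ∧ o1.ord.lt a.1 b.1))

/-- `f^(T)` is an admissible labeled polynomial: some `u` satisfies `f = u·F`, `lpp(u) = T`. -/
def Admissible (o2 : ModOrd n m) (F : Fin m → MvPolynomial (Fin n) K)
    (f : MvPolynomial (Fin n) K) (T : MTerm n m) : Prop :=
  ∃ u : ModElem K n m, f = dotF u F ∧ lppMW o2 u = (T : WithBot (MTerm n m))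

/-- `r` is a strict total order on the set `B` (`r p q` read: `p` was added later than `q`). -/
def StrictTotalOn {X : Type*} (B : Set X) (r : X → X → Prop) : Prop :=
  (∀ p ∈ B, ¬ r p p) ∧
  (∀ p ∈ B, ∀ q ∈ B, ∀ w ∈ B, r p q → r q w → r p w) ∧
  (∀ p ∈ B, ∀ q ∈ B, p ≠ q → r p q ∨ r q p)

/-- `tf o1 f g = lcm(lpp f, lpp g) / lpp f`. -/
def tf (o1 : MonOrd n) (f g : MvPolynomial (Fin n) K) : PP n :=
  (lpp o1 f ⊔ lpp o1 g) - lpp o1 f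

/-- `f^[u]` has a standard representation w.r.t. the set `B` of labeled polynomials. -/
def HasStdRep (o1 : MonOrd n) (o2 : ModOrd n m)
    (B : Set (MvPolynomial (Fin n) K × ModElem K n m))
    (f : MvPolynomial (Fin n) K) (u : ModElem K n m) : Prop :=
  ∃ (s : ℕ) (p : Fin s → MvPolynomial (Fin n) K)
      (q : Fin s → MvPolynomial (Fin n) K × ModElem K n m),
    (∀ i, q i ∈ B) ∧ f = ∑ i, p i * (q i).1 ∧
    (∀ i, wbleP o1 (lppW o1 (p i * (q i).1)) (lppW o1 f)) ∧
    (∀ i, wbleM o2 (lppMW o2 (pmul (p i) ((q i).2))) (lppMW o2 u))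

/-- `(t_p, p, t_q, q)` is a critical pair of labeled polynomials. -/
def IsCritPairL (o1 : MonOrd n) (o2 : ModOrd n m)
    (later : (MvPolynomial (Fin n) K × ModElem K n m) →
      (MvPolynomial (Fin n) K × ModElem K n m) → Prop)
    (p q : MvPolynomial (Fin n) K × ModElem K n m) : Prop :=
  p.1 ≠ 0 ∧ q.1 ≠ 0 ∧
  (wbltM o2 (lppMW o2 (smulPP (tf o1 q.1 p.1) q.2)) (lppMW o2 (smulPP (tf o1 p.1 q.1) p.2)) ∨
   (lppMW o2 (smulPP (tf o1 p.1 q.1) p.2) = lppMW o2 (smulPP (tf o1 q.1 p.1) q.2) ∧ later q p))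

/-- Polynomial part of the S-polynomial of a critical pair of labeled polynomials. -/
def sPolyF (o1 : MonOrd n) (p q : MvPolynomial (Fin n) K × ModElem K n m) :
    MvPolynomial (Fin n) K :=
  monomial (tf o1 p.1 q.1) (1 : K) * p.1 -
    monomial (tf o1 q.1 p.1) (lc o1 p.1 / lc o1 q.1) * q.1

/-- Label part of the S-polynomial of a critical pair of labeled polynomials. -/
def sPolyU (o1 : MonOrd n) (p q : MvPolynomial (Fin n) K × ModElem K n m) : ModElem K n m :=
  fun k => monomial (tf o1 p.1 q.1) (1 : K) * p.2 k -
    monomial (tf o1 q.1 p.1) (lc o1 p.1 / lc o1 q.1) * q.2 k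

/-- `t·p` (labeled version) is F5-divisible by `B`. -/
def F5DivL (o1 : MonOrd n) (o2 : ModOrd n m)
    (B : Set (MvPolynomial (Fin n) K × ModElem K n m)) (t : PP n)
    (p : MvPolynomial (Fin n) K × ModElem K n m) : Prop :=
  ∃ (α : PP n) (i : Fin m), lppMW o2 p.2 = (((α, i) : MTerm n m) : WithBot (MTerm n m)) ∧
    ∃ q ∈ B, q.1 ≠ 0 ∧ ∃ (β : PP n) (j : Fin m),
      lppMW o2 q.2 = (((β, j) : MTerm n m) : WithBot (MTerm n m)) ∧
      lpp o1 q.1 ≤ t + α ∧ o2.ord.lt (((0 : PP n), j) : MTerm n m) (((0 : PP n), i) : MTerm n m)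

/-- `t·p` (labeled version) is F5-rewritable by `B`. -/
def F5RewL (o2 : ModOrd n m)
    (later : (MvPolynomial (Fin n) K × ModElem K n m) →
      (MvPolynomial (Fin n) K × ModElem K n m) → Prop)
    (B : Set (MvPolynomial (Fin n) K × ModElem K n m)) (t : PP n)
    (p : MvPolynomial (Fin n) K × ModElem K n m) : Prop :=
  ∃ q ∈ B, (∃ a b : MTerm n m, lppMW o2 q.2 = (a : WithBot (MTerm n m)) ∧
    lppMW o2 (smulPP t p.2) = (b : WithBot (MTerm n m)) ∧ a.2 = b.2 ∧ a.1 ≤ b.1) ∧ later q p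

/-- A set `G` of labeled polynomials is a full-labeled Gröbner basis for `I = ⟨F⟩`. -/
def IsFullLGBSet (o1 : MonOrd n) (o2 : ModOrd n m) (F : Fin m → MvPolynomial (Fin n) K)
    (G : Set (MvPolynomial (Fin n) K × ModElem K n m)) : Prop :=
  (∀ p ∈ G, p.1 = dotF p.2 F) ∧
  ∀ (f : MvPolynomial (Fin n) K) (u : ModElem K n m), f = dotF u F → f ≠ 0 →
    ∃ p ∈ G, p.1 ≠ 0 ∧ lpp o1 p.1 ≤ lpp o1 f ∧
      wbleM o2 (lppMW o2 (smulPP (lpp o1 f - lpp o1 p.1) p.2)) (lppMW o2 u)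

/-- `t·p` (signature version, `p = f^(x^α eᵢ)`) is F5-divisible by `B`. -/
def F5DivS (o1 : MonOrd n) (o2 : ModOrd n m)
    (B : Set (MvPolynomial (Fin n) K × MTerm n m)) (t : PP n)
    (p : MvPolynomial (Fin n) K × MTerm n m) : Prop :=
  ∃ q ∈ B, q.1 ≠ 0 ∧ lpp o1 q.1 ≤ t + p.2.1 ∧
    o2.ord.lt (((0 : PP n), q.2.2) : MTerm n m) (((0 : PP n), p.2.2) : MTerm n m)

/-- `t·p` (signature version) is F5-rewritable by `B`. -/
def F5RewS
    (later : (MvPolynomial (Fin n) K × MTerm n m) →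
      (MvPolynomial (Fin n) K × MTerm n m) → Prop)
    (B : Set (MvPolynomial (Fin n) K × MTerm n m)) (t : PP n)
    (p : MvPolynomial (Fin n) K × MTerm n m) : Prop :=
  ∃ q ∈ B, q.2.2 = p.2.2 ∧ q.2.1 ≤ t + p.2.1 ∧ later q p

/-- `(t_p, p, t_q, q)` is a critical pair (signature version). -/
def IsCritPairS (o1 : MonOrd n) (o2 : ModOrd n m)
    (later : (MvPolynomial (Fin n) K × MTerm n m) →
      (MvPolynomial (Fin n) K × MTerm n m) → Prop)
    (p q : MvPolynomial (Fin n) K × MTerm n m) : Prop :=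
  p.1 ≠ 0 ∧ q.1 ≠ 0 ∧
  (o2.ord.lt (mtmul (tf o1 q.1 p.1) q.2) (mtmul (tf o1 p.1 q.1) p.2) ∨
   (mtmul (tf o1 p.1 q.1) p.2 = mtmul (tf o1 q.1 p.1) q.2 ∧ later q p))

/-- A finite set `S` of pairs `(g, t)` is a signature-labeled Gröbner basis for `I = ⟨F⟩`. -/
def IsSigLGBSet (o1 : MonOrd n) (o2 : ModOrd n m) (F : Fin m → MvPolynomial (Fin n) K)
    (S : Set (MvPolynomial (Fin n) K × MTerm n m)) : Prop :=
  S.Finite ∧ ∃ V : MvPolynomial (Fin n) K × MTerm n m → ModElem K n m,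
    (∀ p ∈ S, lppMW o2 (V p) = (p.2 : WithBot (MTerm n m))) ∧
    IsFullLGBSet o1 o2 F ((fun p => (p.1, V p)) '' S)

end
noncomputable section

namespace Det

variable {α : Type*}

/-- `≤` on `WithBot α` induced by a linear order `r`. -/
def wble (r : LinearOrder α) (a b : WithBot α) : Prop :=
  @LE.le (WithBot α) (@WithBot.instLE α r.toLE) a b

def wblt (r : LinearOrder α) (a b : WithBot α) : Prop :=
  @LT.lt (WithBot α) (@WithBot.instLT α r.toLT) a b

section WB
variable (r : LinearOrder α)

lemma wble_iff_le (a b : WithBot α) :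
    wble r a b ↔ (letI := r; a ≤ b) := Iff.rfl

lemma wblt_iff_lt (a b : WithBot α) :
    wblt r a b ↔ (letI := r; a < b) := Iff.rfl

lemma wble_refl (a : WithBot α) : wble r a a := by
  letI := r; exact le_refl a

lemma wble_trans {a b c : WithBot α} (h1 : wble r a b) (h2 : wble r b c) : wble r a c := by
  letI := r; exact le_trans h1 h2

lemma wble_bot (a : WithBot α) : wble r ⊥ a := by
  letI := r; exact bot_le

lemma wblt_of_lt_of_le {a b c : WithBot α} (h1 : wblt r a b) (h2 : wble r b c) : wblt r a c := by
  letI := r; exact lt_of_lt_of_le h1 h2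

lemma wblt_of_le_of_lt {a b c : WithBot α} (h1 : wble r a b) (h2 : wblt r b c) : wblt r a c := by
  letI := r; exact lt_of_le_of_lt h1 h2

lemma wble_of_lt {a b : WithBot α} (h : wblt r a b) : wble r a b := by
  letI := r; exact le_of_lt h

lemma wblt_iff_le_not_ge {a b : WithBot α} : wblt r a b ↔ wble r a b ∧ ¬ wble r b a := by
  letI := r; exact lt_iff_le_not_ge

lemma wble_total (a b : WithBot α) : wble r a b ∨ wble r b a := by
  letI := r; exact le_total a b

lemma wblt_trichotomy (a b : WithBot α) : wblt r a b ∨ a = b ∨ wblt r b a := by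
  letI := r; exact lt_trichotomy a b

lemma wblt_or_ge (a b : WithBot α) : wblt r a b ∨ wble r b a := by
  letI := r; exact lt_or_ge a b

lemma wble_coe_iff {a b : α} : wble r (a : WithBot α) b ↔ r.le a b := by
  letI := r; exact WithBot.coe_le_coe

lemma wblt_coe_iff {a b : α} : wblt r (a : WithBot α) b ↔ r.lt a b := by
  letI := r; exact WithBot.coe_lt_coe

lemma wble_bot_iff {a : WithBot α} : wble r a ⊥ ↔ a = ⊥ := by
  letI := r; exact le_bot_iff

lemma wblt_bot_coe (a : α) : wblt r ⊥ (a : WithBot α) := by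
  letI := r; exact WithBot.bot_lt_coe a

lemma wble_ne_of_lt {a b : WithBot α} (h : wblt r a b) : a ≠ b := by
  letI := r; exact ne_of_lt h

lemma wblt_of_le_of_ne {a b : WithBot α} (h : wble r a b) (h2 : a ≠ b) : wblt r a b := by
  letI := r; exact lt_of_le_of_ne h h2

lemma not_wblt_of_le {a b : WithBot α} (h : wble r a b) : ¬ wblt r b a := by
  letI := r; exact not_lt_of_ge h

/-- Finset.max with explicit order. -/
lemma le_fmax {a : α} {s : Finset α} (h : a ∈ s) :
    wble r (a : WithBot α) (@Finset.max α r s) := by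
  letI := r; exact Finset.le_max h

lemma fmax_le {M : WithBot α} {s : Finset α} (h : ∀ a ∈ s, wble r (a : WithBot α) M) :
    wble r (@Finset.max α r s) M := by
  letI := r; exact Finset.max_le h

lemma fmax_eq_bot {s : Finset α} : @Finset.max α r s = ⊥ ↔ s = ∅ := by
  letI := r; exact Finset.max_eq_bot

lemma fmax_mem {s : Finset α} {a : α} (h : @Finset.max α r s = (a : WithBot α)) : a ∈ s := by
  letI := r; exact Finset.mem_of_max h

lemma wble_antisymm {a b : WithBot α} (h1 : wble r a b) (h2 : wble r b a) : a = b := by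
  letI := r; exact le_antisymm h1 h2

lemma fmax_exists {s : Finset α} (h : s ≠ ∅) :
    ∃ a ∈ s, @Finset.max α r s = (a : WithBot α) := by
  letI := r
  obtain ⟨a, ha⟩ := WithBot.ne_bot_iff_exists.1 (fun hb => h (Finset.max_eq_bot.1 hb))
  exact ⟨a, Finset.mem_of_max ha.symm, ha.symm⟩

end WB

end Det

namespace Det

section Poly
variable {K : Type*} [Field K] {n : ℕ} (o1 : MonOrd n)

lemma wbleP_eq : wbleP (n := n) o1 = wble o1.ord := rfl
lemma wbltP_eq : wbltP (n := n) o1 = wblt o1.ord := rfl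

lemma lppW_def (f : MvPolynomial (Fin n) K) : lppW o1 f = @Finset.max _ o1.ord f.support := rfl

lemma lppW_eq_bot {f : MvPolynomial (Fin n) K} : lppW o1 f = ⊥ ↔ f = 0 := by
  rw [lppW_def, fmax_eq_bot, MvPolynomial.support_eq_empty]

lemma lppW_coe {f : MvPolynomial (Fin n) K} (hf : f ≠ 0) :
    lppW o1 f = (lpp o1 f : WithBot (PP n)) := by
  obtain ⟨a, _, ha⟩ := fmax_exists o1.ord (s := f.support)
    (fun h => hf (MvPolynomial.support_eq_empty.1 h))
  have ha' : lppW o1 f = (a : WithBot (PP n)) := ha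
  rw [ha', lpp, ha']; rfl

lemma lpp_mem {f : MvPolynomial (Fin n) K} (hf : f ≠ 0) : lpp o1 f ∈ f.support := by
  have := lppW_coe o1 hf
  rw [lppW_def] at this
  exact fmax_mem o1.ord this

lemma lc_ne_zero {f : MvPolynomial (Fin n) K} (hf : f ≠ 0) : lc o1 f ≠ 0 := by
  have := lpp_mem o1 hf
  rw [MvPolynomial.mem_support_iff] at this
  exact this

lemma coe_le_lppW {f : MvPolynomial (Fin n) K} {a : PP n} (h : a ∈ f.support) :
    wble o1.ord (a : WithBot (PP n)) (lppW o1 f) := le_fmax o1.ord h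

lemma coeff_le_lppW {f : MvPolynomial (Fin n) K} {a : PP n} (h : MvPolynomial.coeff a f ≠ 0) :
    wble o1.ord (a : WithBot (PP n)) (lppW o1 f) :=
  coe_le_lppW o1 (MvPolynomial.mem_support_iff.2 h)

lemma coeff_eq_zero_of_lppW_lt {f : MvPolynomial (Fin n) K} {a : PP n}
    (h : wblt o1.ord (lppW o1 f) (a : WithBot (PP n))) : MvPolynomial.coeff a f = 0 := by
  by_contra hc
  exact not_wblt_of_le o1.ord (coeff_le_lppW o1 hc) h

lemma lppW_le_of_forall {f : MvPolynomial (Fin n) K} {M : WithBot (PP n)}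
    (h : ∀ a ∈ f.support, wble o1.ord (a : WithBot (PP n)) M) :
    wble o1.ord (lppW o1 f) M := fmax_le o1.ord h

lemma lppW_add_le {f g : MvPolynomial (Fin n) K} {M : WithBot (PP n)}
    (hf : wble o1.ord (lppW o1 f) M) (hg : wble o1.ord (lppW o1 g) M) :
    wble o1.ord (lppW o1 (f + g)) M := by
  refine lppW_le_of_forall o1 (fun a ha => ?_)
  rw [MvPolynomial.mem_support_iff, MvPolynomial.coeff_add] at ha
  rcases (by by_contra hc; push_neg at hc; rw [hc.1, hc.2, add_zero] at ha; exact ha rfl :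
      MvPolynomial.coeff a f ≠ 0 ∨ MvPolynomial.coeff a g ≠ 0) with h | h
  · exact wble_trans o1.ord (coeff_le_lppW o1 h) hf
  · exact wble_trans o1.ord (coeff_le_lppW o1 h) hg

lemma lppW_neg (f : MvPolynomial (Fin n) K) : lppW o1 (-f) = lppW o1 f := by
  rw [lppW_def, lppW_def, MvPolynomial.support_neg]

lemma lppW_sub_le {f g : MvPolynomial (Fin n) K} {M : WithBot (PP n)}
    (hf : wble o1.ord (lppW o1 f) M) (hg : wble o1.ord (lppW o1 g) M) :
    wble o1.ord (lppW o1 (f - g)) M := by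
  rw [sub_eq_add_neg]
  exact lppW_add_le o1 hf (by rw [lppW_neg]; exact hg)

/-- order compatibility helpers on `PP n` -/
lemma padd_lt_left {a b : PP n} (γ : PP n) (h : o1.ord.lt a b) :
    o1.ord.lt (γ + a) (γ + b) := o1.mul_lt γ a b h

lemma padd_le_left {a b : PP n} (γ : PP n) (h : o1.ord.le a b) :
    o1.ord.le (γ + a) (γ + b) := by
  rcases (@lt_or_eq_of_le _ o1.ord.toPartialOrder _ _ h : o1.ord.lt a b ∨ a = b) with h' | h'
  · exact @le_of_lt _ o1.ord.toPartialOrder.toPreorder _ _ (o1.mul_lt γ a b h')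
  · rw [h']; exact o1.ord.le_refl _

lemma padd_lt_right {a b : PP n} (γ : PP n) (h : o1.ord.lt a b) :
    o1.ord.lt (a + γ) (b + γ) := by
  rw [add_comm a γ, add_comm b γ]; exact padd_lt_left o1 γ h

lemma padd_le_right {a b : PP n} (γ : PP n) (h : o1.ord.le a b) :
    o1.ord.le (a + γ) (b + γ) := by
  rw [add_comm a γ, add_comm b γ]; exact padd_le_left o1 γ h

lemma padd_le_add {a b c d : PP n} (h1 : o1.ord.le a b) (h2 : o1.ord.le c d) :
    o1.ord.le (a + c) (b + d) :=
  o1.ord.le_trans _ _ _ (padd_le_right o1 c h1) (padd_le_left o1 b h2)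

lemma ple_self_add (σ a : PP n) : o1.ord.le a (σ + a) := by
  have := padd_le_right o1 a (o1.one_le σ)
  rwa [zero_add] at this

end Poly

end Det

set_option maxHeartbeats 1000000

namespace Det

section Poly2
variable {K : Type*} [Field K] {n : ℕ} (o1 : MonOrd n)

lemma fmax_lt_coe {r : LinearOrder (PP n)} {s : Finset (PP n)} {M : PP n}
    (h : ∀ a ∈ s, wblt r (a : WithBot (PP n)) (M : WithBot (PP n))) :
    wblt r (@Finset.max _ r s) (M : WithBot (PP n)) := by
  rcases eq_or_ne s ∅ with hs | hs
  · rw [hs]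
    exact (fmax_eq_bot r (s := ∅)).2 rfl ▸ wblt_bot_coe r M
  · obtain ⟨a, ha, ha'⟩ := fmax_exists r hs
    rw [ha']; exact h a ha

lemma lpp_eq_of_lppW {f : MvPolynomial (Fin n) K} {a : PP n}
    (h : lppW o1 f = (a : WithBot (PP n))) : lpp o1 f = a := by
  rw [lpp, h]; rfl

lemma coeff_mul_lpp {f g : MvPolynomial (Fin n) K} (hf : f ≠ 0) (hg : g ≠ 0) :
    MvPolynomial.coeff (lpp o1 f + lpp o1 g) (f * g) = lc o1 f * lc o1 g := by
  rw [MvPolynomial.coeff_mul]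
  rw [Finset.sum_eq_single_of_mem (lpp o1 f, lpp o1 g) (by rw [Finset.HasAntidiagonal.mem_antidiagonal])]
  · rfl
  · rintro ⟨b1, b2⟩ hb hne
    rw [Finset.HasAntidiagonal.mem_antidiagonal] at hb
    by_contra hc
    have h1 : MvPolynomial.coeff b1 f ≠ 0 := fun h0 => hc (by simp [h0])
    have h2 : MvPolynomial.coeff b2 g ≠ 0 := fun h0 => hc (by simp [h0])
    have hb1 : o1.ord.le b1 (lpp o1 f) := by
      have := coeff_le_lppW o1 h1; rw [lppW_coe o1 hf, wble_coe_iff] at this; exact this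
    have hb2 : o1.ord.le b2 (lpp o1 g) := by
      have := coeff_le_lppW o1 h2; rw [lppW_coe o1 hg, wble_coe_iff] at this; exact this
    rcases (@lt_or_eq_of_le _ o1.ord.toPartialOrder _ _ hb1 :
        o1.ord.lt b1 (lpp o1 f) ∨ b1 = lpp o1 f) with h' | h'
    · have hlt : o1.ord.lt (b1 + b2) (lpp o1 f + lpp o1 g) :=
        @lt_of_lt_of_le _ o1.ord.toPartialOrder.toPreorder _ _ _
          (padd_lt_right o1 b2 h') (padd_le_left o1 _ hb2)
      rw [hb] at hlt
      exact @lt_irrefl _ o1.ord.toPartialOrder.toPreorder _ hlt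
    · subst h'
      have hb2' : b2 = lpp o1 g := by
        ext i
        have := DFunLike.congr_fun hb i
        simp only [Finsupp.add_apply] at this
        omega
      exact hne (by rw [hb2'])

lemma lppW_mul {f g : MvPolynomial (Fin n) K} (hf : f ≠ 0) (hg : g ≠ 0) :
    lppW o1 (f * g) = ((lpp o1 f + lpp o1 g : PP n) : WithBot (PP n)) := by
  classical
  have hcoeff := coeff_mul_lpp o1 hf hg
  have hne : MvPolynomial.coeff (lpp o1 f + lpp o1 g) (f * g) ≠ 0 := by
    rw [hcoeff]; exact mul_ne_zero (lc_ne_zero o1 hf) (lc_ne_zero o1 hg)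
  refine wble_antisymm o1.ord ?_ (coeff_le_lppW o1 hne)
  refine lppW_le_of_forall o1 (fun a ha => ?_)
  rw [MvPolynomial.mem_support_iff, MvPolynomial.coeff_mul] at ha
  obtain ⟨⟨b1, b2⟩, hb, hbne⟩ := Finset.exists_ne_zero_of_sum_ne_zero ha
  rw [Finset.HasAntidiagonal.mem_antidiagonal] at hb
  have h1 : MvPolynomial.coeff b1 f ≠ 0 := fun h0 => hbne (by simp [h0])
  have h2 : MvPolynomial.coeff b2 g ≠ 0 := fun h0 => hbne (by simp [h0])
  have hb1 : o1.ord.le b1 (lpp o1 f) := by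
    have := coeff_le_lppW o1 h1; rw [lppW_coe o1 hf, wble_coe_iff] at this; exact this
  have hb2 : o1.ord.le b2 (lpp o1 g) := by
    have := coeff_le_lppW o1 h2; rw [lppW_coe o1 hg, wble_coe_iff] at this; exact this
  rw [← hb, wble_coe_iff]
  exact padd_le_add o1 hb1 hb2

lemma lpp_mul {f g : MvPolynomial (Fin n) K} (hf : f ≠ 0) (hg : g ≠ 0) :
    lpp o1 (f * g) = lpp o1 f + lpp o1 g := lpp_eq_of_lppW o1 (lppW_mul o1 hf hg)

lemma lc_mul {f g : MvPolynomial (Fin n) K} (hf : f ≠ 0) (hg : g ≠ 0) :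
    lc o1 (f * g) = lc o1 f * lc o1 g := by
  rw [lc, lpp_mul o1 hf hg]; exact coeff_mul_lpp o1 hf hg


/-- support elements of `monomial t c * x` decompose as `t + δ`. -/
lemma mem_support_monmul {t : PP n} {c : K} {x : MvPolynomial (Fin n) K} {a : PP n}
    (ha : a ∈ (MvPolynomial.monomial t c * x).support) :
    ∃ δ ∈ x.support, a = t + δ := by
  rw [MvPolynomial.mem_support_iff, MvPolynomial.coeff_monomial_mul'] at ha
  split_ifs at ha with hle
  · exact ⟨a - t, MvPolynomial.mem_support_iff.2 (fun h0 => ha (by rw [h0, mul_zero])),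
      (add_tsub_cancel_of_le hle).symm⟩
  · exact absurd rfl ha

lemma lppW_monmul_le {t : PP n} {c : K} {x : MvPolynomial (Fin n) K} {L : PP n}
    (h : wble o1.ord (lppW o1 x) (L : WithBot (PP n))) :
    wble o1.ord (lppW o1 (MvPolynomial.monomial t c * x)) ((t + L : PP n) : WithBot (PP n)) := by
  refine lppW_le_of_forall o1 (fun a ha => ?_)
  obtain ⟨δ, hδ, rfl⟩ := mem_support_monmul ha
  have := wble_trans o1.ord (coe_le_lppW o1 hδ) h
  rw [wble_coe_iff] at this ⊢
  exact padd_le_left o1 t this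

lemma lppW_monmul_lt {t : PP n} {c : K} {x : MvPolynomial (Fin n) K} {L : PP n}
    (h : wblt o1.ord (lppW o1 x) (L : WithBot (PP n))) :
    wblt o1.ord (lppW o1 (MvPolynomial.monomial t c * x)) ((t + L : PP n) : WithBot (PP n)) := by
  rw [lppW_def]
  refine fmax_lt_coe (fun a ha => ?_)
  obtain ⟨δ, hδ, rfl⟩ := mem_support_monmul ha
  have := wblt_of_le_of_lt o1.ord (coe_le_lppW o1 hδ) h
  rw [wblt_coe_iff] at this ⊢
  exact padd_lt_left o1 t this

lemma lppW_tail {f : MvPolynomial (Fin n) K} (hf : f ≠ 0) :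
    wblt o1.ord (lppW o1 (f - MvPolynomial.monomial (lpp o1 f) (lc o1 f)))
      ((lpp o1 f : PP n) : WithBot (PP n)) := by
  classical
  rw [lppW_def]
  refine fmax_lt_coe (fun a ha => ?_)
  rw [MvPolynomial.mem_support_iff, MvPolynomial.coeff_sub, MvPolynomial.coeff_monomial] at ha
  have hane : a ≠ lpp o1 f := by
    intro h0
    rw [h0, if_pos rfl] at ha
    exact ha (sub_self _)
  rw [if_neg (Ne.symm hane), sub_zero] at ha
  have := coeff_le_lppW o1 ha
  rw [lppW_coe o1 hf] at this
  exact wblt_of_le_of_ne o1.ord this (by simpa using hane)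

end Poly2

end Det

namespace Det

section Mod
variable {K : Type*} [Field K] {n m : ℕ} (o1 : MonOrd n) (o2 : ModOrd n m)

lemma wbleM_eq : wbleM (n := n) (m := m) o2 = wble o2.ord := rfl
lemma wbltM_eq : wbltM (n := n) (m := m) o2 = wblt o2.ord := rfl

lemma pp_add_right_cancel {a b c : PP n} (h : a + c = b + c) : a = b := by
  ext i
  have := DFunLike.congr_fun h i
  simp only [Finsupp.add_apply] at this
  omega

lemma lpp_monomial {t : PP n} {c : K} (hc : c ≠ 0) :
    lpp o1 (MvPolynomial.monomial t c) = t := by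
  refine lpp_eq_of_lppW o1 ?_
  classical
  rw [lppW_def, MvPolynomial.support_monomial, if_neg hc]
  rfl

lemma monomial_ne_zero' {t : PP n} {c : K} (hc : c ≠ 0) :
    (MvPolynomial.monomial t c : MvPolynomial (Fin n) K) ≠ 0 := by
  rw [Ne, MvPolynomial.monomial_eq_zero]; exact hc

lemma mem_msupport {u : ModElem K n m} {a : MTerm n m} :
    a ∈ msupport u ↔ a.1 ∈ (u a.2).support := by
  constructor
  · intro h
    rw [msupport, Finset.mem_biUnion] at h
    obtain ⟨j, -, hj⟩ := h
    rw [Finset.mem_image] at hj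
    obtain ⟨α, hα, rfl⟩ := hj
    exact hα
  · intro h
    rw [msupport, Finset.mem_biUnion]
    exact ⟨a.2, Finset.mem_univ _, Finset.mem_image.2 ⟨a.1, h, rfl⟩⟩

lemma msupport_eq_empty {u : ModElem K n m} : msupport u = ∅ ↔ u = 0 := by
  constructor
  · intro h
    funext k
    by_contra hk
    obtain ⟨α, hα⟩ := Finset.nonempty_iff_ne_empty.2
      (fun h0 => hk (MvPolynomial.support_eq_empty.1 h0))
    have : ((α, k) : MTerm n m) ∈ msupport u := mem_msupport.2 hα
    rw [h] at this
    exact absurd this (Finset.notMem_empty _)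
  · intro h
    subst h
    rw [Finset.eq_empty_iff_forall_notMem]
    intro a ha
    rw [mem_msupport] at ha
    simp only [Pi.zero_apply, MvPolynomial.support_zero] at ha
    exact absurd ha (Finset.notMem_empty _)

lemma lppMW_eq_bot {u : ModElem K n m} : lppMW o2 u = ⊥ ↔ u = 0 := by
  rw [lppMW, fmax_eq_bot, msupport_eq_empty]

lemma coe_le_lppMW {u : ModElem K n m} {a : MTerm n m} (h : a ∈ msupport u) :
    wble o2.ord (a : WithBot (MTerm n m)) (lppMW o2 u) := le_fmax o2.ord h

lemma lppMW_le_of_forall {u : ModElem K n m} {M : WithBot (MTerm n m)}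
    (h : ∀ a ∈ msupport u, wble o2.ord (a : WithBot (MTerm n m)) M) :
    wble o2.ord (lppMW o2 u) M := fmax_le o2.ord h

lemma lppMW_add_le {x y : ModElem K n m} {M : WithBot (MTerm n m)}
    (hx : wble o2.ord (lppMW o2 x) M) (hy : wble o2.ord (lppMW o2 y) M) :
    wble o2.ord (lppMW o2 (x + y)) M := by
  refine lppMW_le_of_forall o2 (fun a ha => ?_)
  rw [mem_msupport] at ha
  have : MvPolynomial.coeff a.1 (x a.2) ≠ 0 ∨ MvPolynomial.coeff a.1 (y a.2) ≠ 0 := by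
    by_contra hc
    push_neg at hc
    rw [MvPolynomial.mem_support_iff] at ha
    refine ha ?_
    show MvPolynomial.coeff a.1 (x a.2 + y a.2) = 0
    rw [MvPolynomial.coeff_add, hc.1, hc.2, add_zero]
  rcases this with h | h
  · exact wble_trans o2.ord (coe_le_lppMW o2 (mem_msupport.2 (MvPolynomial.mem_support_iff.2 h))) hx
  · exact wble_trans o2.ord (coe_le_lppMW o2 (mem_msupport.2 (MvPolynomial.mem_support_iff.2 h))) hy

lemma lppMW_neg (x : ModElem K n m) : lppMW o2 (-x) = lppMW o2 x := by
  have : msupport (-x) = msupport x := by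
    ext a
    rw [mem_msupport, mem_msupport]
    show a.1 ∈ (-(x a.2)).support ↔ _
    rw [MvPolynomial.support_neg]
  rw [lppMW, lppMW, this]

lemma lppMW_sub_le {x y : ModElem K n m} {M : WithBot (MTerm n m)}
    (hx : wble o2.ord (lppMW o2 x) M) (hy : wble o2.ord (lppMW o2 y) M) :
    wble o2.ord (lppMW o2 (x - y)) M := by
  rw [sub_eq_add_neg]
  exact lppMW_add_le o2 hx (by rw [lppMW_neg]; exact hy)

lemma mtmul_le {t : PP n} {a b : MTerm n m} (h : o2.ord.le a b) :
    o2.ord.le (mtmul t a) (mtmul t b) := by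
  rcases (@lt_or_eq_of_le _ o2.ord.toPartialOrder _ _ h : o2.ord.lt a b ∨ a = b) with h' | h'
  · exact @le_of_lt _ o2.ord.toPartialOrder.toPreorder _ _ (o2.mul_lt t a b h')
  · rw [h']; exact o2.ord.le_refl _

end Mod

end Det

namespace Det

section POT
variable {K : Type*} [Field K] {n m : ℕ} (o1 : MonOrd n) (o2 : ModOrd n m)

lemma pot_le_same (hpot : IsPOT o1 o2) {a b : PP n} {i : Fin m} (h : o1.ord.le a b) :
    o2.ord.le ((a, i) : MTerm n m) ((b, i) : MTerm n m) := by
  rcases (@lt_or_eq_of_le _ o1.ord.toPartialOrder _ _ h : o1.ord.lt a b ∨ a = b) with h' | h'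
  · exact @le_of_lt _ o2.ord.toPartialOrder.toPreorder _ _
      ((hpot _ _).2 (Or.inr ⟨rfl, h'⟩))
  · rw [h']; exact o2.ord.le_refl _

lemma pot_lt_pos (hpot : IsPOT o1 o2) {a b : PP n} {i j : Fin m} (h : j < i) :
    o2.ord.lt ((a, i) : MTerm n m) ((b, j) : MTerm n m) := (hpot _ _).2 (Or.inl h)

lemma smulPP_eq_pmul (t : PP n) (v : ModElem K n m) :
    smulPP t v = pmul (MvPolynomial.monomial t (1 : K)) v := rfl

lemma smulPP_smulPP (σ t : PP n) (v : ModElem K n m) :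
    smulPP σ (smulPP t v) = smulPP (σ + t) v := by
  funext k
  show MvPolynomial.monomial σ (1:K) * (MvPolynomial.monomial t (1:K) * v k) = _
  rw [← mul_assoc, MvPolynomial.monomial_mul, one_mul]
  rfl

lemma pmul_zero_left (v : ModElem K n m) : pmul 0 v = 0 := by
  funext k; exact zero_mul _

lemma pmul_zero_right (p : MvPolynomial (Fin n) K) : pmul p (0 : ModElem K n m) = 0 := by
  funext k; exact mul_zero _

lemma pmul_add_left (a b : MvPolynomial (Fin n) K) (v : ModElem K n m) :
    pmul (a + b) v = pmul a v + pmul b v := by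
  funext k; exact add_mul _ _ _

lemma pmul_sub_left (a b : MvPolynomial (Fin n) K) (v : ModElem K n m) :
    pmul (a - b) v = pmul a v - pmul b v := by
  funext k; exact sub_mul _ _ _

lemma pmul_pmul (a b : MvPolynomial (Fin n) K) (v : ModElem K n m) :
    pmul (a * b) v = pmul a (pmul b v) := by
  funext k; exact mul_assoc _ _ _

lemma lppMW_char {v : ModElem K n m} (hpot : IsPOT o1 o2) (hv : v ≠ 0) :
    ∃ i₀ : Fin m, v i₀ ≠ 0 ∧
      lppMW o2 v = (((lpp o1 (v i₀), i₀) : MTerm n m) : WithBot (MTerm n m)) := by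
  obtain ⟨⟨δ, i₀⟩, hmem, hmax⟩ := fmax_exists o2.ord
    (fun h0 => hv (msupport_eq_empty.1 h0))
  have hmem' : δ ∈ (v i₀).support := mem_msupport.1 hmem
  have hvi : v i₀ ≠ 0 := fun h0 => by
    rw [h0, MvPolynomial.support_zero] at hmem'; exact absurd hmem' (Finset.notMem_empty _)
  refine ⟨i₀, hvi, ?_⟩
  have h1 : o1.ord.le δ (lpp o1 (v i₀)) := by
    have := coe_le_lppW o1 hmem'
    rwa [lppW_coe o1 hvi, wble_coe_iff] at this
  have h2 : o2.ord.le ((lpp o1 (v i₀), i₀) : MTerm n m) ((δ, i₀) : MTerm n m) := by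
    have hm : ((lpp o1 (v i₀), i₀) : MTerm n m) ∈ msupport v :=
      mem_msupport.2 (lpp_mem o1 hvi)
    have := coe_le_lppMW o2 hm
    rw [show lppMW o2 v = @Finset.max _ o2.ord (msupport v) from rfl, hmax, wble_coe_iff] at this
    exact this
  have h3 : o1.ord.le (lpp o1 (v i₀)) δ := by
    rcases (@lt_or_eq_of_le _ o2.ord.toPartialOrder _ _ h2) with h' | h'
    · rcases (hpot _ _).1 h' with h'' | h''
      · exact absurd h'' (lt_irrefl _)
      · exact @le_of_lt _ o1.ord.toPartialOrder.toPreorder _ _ h''.2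
    · rw [show lpp o1 (v i₀) = δ from congrArg Prod.fst h']
      exact o1.ord.le_refl _
  have hδ : δ = lpp o1 (v i₀) := o1.ord.le_antisymm _ _ h1 h3
  rw [show lppMW o2 v = @Finset.max _ o2.ord (msupport v) from rfl, hmax, hδ]

lemma lppMW_pmul (hpot : IsPOT o1 o2) {p : MvPolynomial (Fin n) K} {v : ModElem K n m}
    (hp : p ≠ 0) {i₀ : Fin m} (hvi : v i₀ ≠ 0)
    (hchar : lppMW o2 v = (((lpp o1 (v i₀), i₀) : MTerm n m) : WithBot (MTerm n m))) :
    lppMW o2 (pmul p v) =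
      (((lpp o1 p + lpp o1 (v i₀), i₀) : MTerm n m) : WithBot (MTerm n m)) := by
  refine wble_antisymm o2.ord ?_ ?_
  · refine lppMW_le_of_forall o2 (fun a ha => ?_)
    obtain ⟨γ, k⟩ := a
    have hγ : γ ∈ (p * v k).support := mem_msupport.1 ha
    have hvk : v k ≠ 0 := by
      intro h0
      rw [h0, mul_zero, MvPolynomial.support_zero] at hγ
      exact absurd hγ (Finset.notMem_empty _)
    have hγle : o1.ord.le γ (lpp o1 p + lpp o1 (v k)) := by
      have := coe_le_lppW o1 hγ
      rwa [lppW_mul o1 hp hvk, wble_coe_iff] at this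
    rcases eq_or_ne k i₀ with rfl | hk
    · rw [wble_coe_iff]
      exact pot_le_same o1 o2 hpot hγle
    · have hlt : o2.ord.lt ((lpp o1 (v k), k) : MTerm n m) ((lpp o1 (v i₀), i₀) : MTerm n m) := by
        have hm : ((lpp o1 (v k), k) : MTerm n m) ∈ msupport v :=
          mem_msupport.2 (lpp_mem o1 hvk)
        have hle := coe_le_lppMW o2 hm
        rw [hchar, wble_coe_iff] at hle
        rcases (@lt_or_eq_of_le _ o2.ord.toPartialOrder _ _ hle) with h' | h'
        · exact h'
        · rw [Prod.ext_iff] at h'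
          exact absurd h'.2 hk
      have hpos : i₀ < k := by
        rcases (hpot _ _).1 hlt with h' | h'
        · exact h'
        · exact absurd h'.1 hk
      rw [wble_coe_iff]
      exact @le_of_lt _ o2.ord.toPartialOrder.toPreorder _ _ (pot_lt_pos o1 o2 hpot hpos)
  · refine coe_le_lppMW o2 (mem_msupport.2 ?_)
    show lpp o1 p + lpp o1 (v i₀) ∈ (p * v i₀).support
    rw [MvPolynomial.mem_support_iff, coeff_mul_lpp o1 hp hvi]
    exact mul_ne_zero (lc_ne_zero o1 hp) (lc_ne_zero o1 hvi)

lemma lppMW_smul_eq (hpot : IsPOT o1 o2) {v : ModElem K n m} (t : PP n) {i₀ : Fin m}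
    (hvi : v i₀ ≠ 0)
    (hchar : lppMW o2 v = (((lpp o1 (v i₀), i₀) : MTerm n m) : WithBot (MTerm n m))) :
    lppMW o2 (smulPP t v) =
      (((t + lpp o1 (v i₀), i₀) : MTerm n m) : WithBot (MTerm n m)) := by
  rw [smulPP_eq_pmul,
    lppMW_pmul o1 o2 hpot (monomial_ne_zero' (one_ne_zero : (1:K) ≠ 0)) hvi hchar,
    lpp_monomial o1 (one_ne_zero : (1:K) ≠ 0)]

lemma smul_zero' (t : PP n) : smulPP t (0 : ModElem K n m) = 0 := by
  funext k; exact mul_zero _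

lemma lppMW_smul_mono (hpot : IsPOT o1 o2) (t : PP n) {x y : ModElem K n m}
    (h : wble o2.ord (lppMW o2 x) (lppMW o2 y)) :
    wble o2.ord (lppMW o2 (smulPP t x)) (lppMW o2 (smulPP t y)) := by
  rcases eq_or_ne x 0 with rfl | hx
  · rw [smul_zero', (lppMW_eq_bot o2).2 rfl]
    exact wble_bot o2.ord _
  have hy : y ≠ 0 := by
    intro h0
    rw [h0, (lppMW_eq_bot o2).2 rfl, wble_bot_iff, lppMW_eq_bot] at h
    exact hx h
  obtain ⟨i₀, hxi, hxc⟩ := lppMW_char o1 o2 hpot hx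
  obtain ⟨j₀, hyj, hyc⟩ := lppMW_char o1 o2 hpot hy
  rw [hxc, hyc, wble_coe_iff] at h
  rw [lppMW_smul_eq o1 o2 hpot t hxi hxc, lppMW_smul_eq o1 o2 hpot t hyj hyc, wble_coe_iff]
  exact mtmul_le o2 (t := t) h

lemma lppMW_le_smul (hpot : IsPOT o1 o2) (σ : PP n) (x : ModElem K n m) :
    wble o2.ord (lppMW o2 x) (lppMW o2 (smulPP σ x)) := by
  rcases eq_or_ne x 0 with rfl | hx
  · rw [(lppMW_eq_bot o2).2 rfl]; exact wble_bot o2.ord _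
  obtain ⟨i₀, hxi, hxc⟩ := lppMW_char o1 o2 hpot hx
  rw [hxc, lppMW_smul_eq o1 o2 hpot σ hxi hxc, wble_coe_iff]
  exact pot_le_same o1 o2 hpot (ple_self_add o1 σ _)

lemma lppMW_monc_le (hpot : IsPOT o1 o2) (t : PP n) (c : K) (v : ModElem K n m) :
    wble o2.ord (lppMW o2 (pmul (MvPolynomial.monomial t c) v)) (lppMW o2 (smulPP t v)) := by
  rcases eq_or_ne c 0 with rfl | hc
  · rw [show MvPolynomial.monomial t (0:K) = 0 from MvPolynomial.monomial_eq_zero.2 rfl,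
      pmul_zero_left, (lppMW_eq_bot o2).2 rfl]
    exact wble_bot o2.ord _
  rcases eq_or_ne v 0 with rfl | hv
  · rw [pmul_zero_right, (lppMW_eq_bot o2).2 rfl]
    exact wble_bot o2.ord _
  obtain ⟨i₀, hvi, hvc⟩ := lppMW_char o1 o2 hpot hv
  rw [lppMW_pmul o1 o2 hpot (monomial_ne_zero' hc) hvi hvc,
    lppMW_smul_eq o1 o2 hpot t hvi hvc, lpp_monomial o1 hc]
  exact wble_refl o2.ord _

end POT

end Det

namespace Det

section SPoly
variable {K : Type*} [Field K] {n m : ℕ} (o1 : MonOrd n) (o2 : ModOrd n m)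

lemma tf_add_left (g h : MvPolynomial (Fin n) K) :
    lpp o1 g + tf o1 g h = lpp o1 g ⊔ lpp o1 h :=
  add_tsub_cancel_of_le le_sup_left

lemma sPolyF_eq (P Q : MvPolynomial (Fin n) K × ModElem K n m) :
    sPolyF o1 P Q = MvPolynomial.monomial (tf o1 P.1 Q.1) (1:K) * P.1 -
      MvPolynomial.monomial (tf o1 Q.1 P.1) (lc o1 P.1 / lc o1 Q.1) * Q.1 := rfl

lemma sPolyU_eq (P Q : MvPolynomial (Fin n) K × ModElem K n m) :
    sPolyU o1 P Q = smulPP (tf o1 P.1 Q.1) P.2 -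
      pmul (MvPolynomial.monomial (tf o1 Q.1 P.1) (lc o1 P.1 / lc o1 Q.1)) Q.2 := rfl

lemma lppW_sPolyF_lt {P Q : MvPolynomial (Fin n) K × ModElem K n m}
    (hP : P.1 ≠ 0) (hQ : Q.1 ≠ 0) :
    wblt o1.ord (lppW o1 (sPolyF o1 P Q))
      ((lpp o1 P.1 ⊔ lpp o1 Q.1 : PP n) : WithBot (PP n)) := by
  classical
  set g := P.1
  set h := Q.1
  set a := lpp o1 g
  set b := lpp o1 h
  set L : PP n := a ⊔ b with hL
  set tg := tf o1 g h with htg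
  set th := tf o1 h g with hth
  have hag : a + tg = L := tf_add_left o1 g h
  have hbh : b + th = L := by
    rw [hth, hL]
    have := tf_add_left o1 h g
    rw [sup_comm] at this
    exact this
  rw [lppW_def]
  refine fmax_lt_coe (fun γ hγ => ?_)
  have hcoeff : MvPolynomial.coeff γ (sPolyF o1 P Q) ≠ 0 := MvPolynomial.mem_support_iff.1 hγ
  -- γ is in the support of one of the two products
  have hsub : γ ∈ (MvPolynomial.monomial tg (1:K) * g).support ∨
      γ ∈ (MvPolynomial.monomial th (lc o1 g / lc o1 h) * h).support := by
    by_contra hc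
    push_neg at hc
    rw [MvPolynomial.notMem_support_iff, MvPolynomial.notMem_support_iff] at hc
    rw [sPolyF_eq, MvPolynomial.coeff_sub] at hcoeff
    exact hcoeff (by rw [hc.1, hc.2, sub_zero])
  -- γ ⪯ L
  have hγle : o1.ord.le γ L := by
    rcases hsub with hs | hs
    · obtain ⟨δ, hδ, rfl⟩ := mem_support_monmul hs
      have : o1.ord.le δ a := by
        have := coe_le_lppW o1 hδ
        rwa [lppW_coe o1 hP, wble_coe_iff] at this
      have h2 := padd_le_left o1 tg this
      rw [add_comm tg a, hag] at h2
      exact h2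
    · obtain ⟨δ, hδ, rfl⟩ := mem_support_monmul hs
      have : o1.ord.le δ b := by
        have := coe_le_lppW o1 hδ
        rwa [lppW_coe o1 hQ, wble_coe_iff] at this
      have h2 := padd_le_left o1 th this
      rw [add_comm th b, hbh] at h2
      exact h2
  -- coefficient at L cancels
  have hcL : MvPolynomial.coeff L (sPolyF o1 P Q) = 0 := by
    rw [sPolyF_eq, MvPolynomial.coeff_sub]
    have e1 : MvPolynomial.coeff L (MvPolynomial.monomial tg (1:K) * g) = lc o1 g := by
      rw [← hag, add_comm a tg, MvPolynomial.coeff_monomial_mul, one_mul]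
      rfl
    have e2 : MvPolynomial.coeff L
        (MvPolynomial.monomial th (lc o1 g / lc o1 h) * h) = lc o1 g := by
      rw [← hbh, add_comm b th, MvPolynomial.coeff_monomial_mul]
      show lc o1 g / lc o1 h * lc o1 h = lc o1 g
      exact div_mul_cancel₀ _ (lc_ne_zero o1 hQ)
    rw [e1, e2, sub_self]
  have hne : γ ≠ L := fun h0 => hcoeff (h0 ▸ hcL)
  rw [wblt_coe_iff]
  exact @lt_of_le_of_ne _ o1.ord.toPartialOrder _ _ hγle hne

lemma lppMW_sPolyU_le (hpot : IsPOT o1 o2) {P Q : MvPolynomial (Fin n) K × ModElem K n m}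
    (hle : wble o2.ord (lppMW o2 (smulPP (tf o1 Q.1 P.1) Q.2))
      (lppMW o2 (smulPP (tf o1 P.1 Q.1) P.2))) :
    wble o2.ord (lppMW o2 (sPolyU o1 P Q)) (lppMW o2 (smulPP (tf o1 P.1 Q.1) P.2)) := by
  rw [sPolyU_eq]
  refine lppMW_sub_le o2 (wble_refl o2.ord _) ?_
  exact wble_trans o2.ord (lppMW_monc_le o1 o2 hpot _ _ _) hle

end SPoly

section Util

lemma exists_strict_bound {α : Type*} (r : LinearOrder α) (l : List (WithBot α)) :
    ∃ M, (∀ x ∈ l, wble r x M) ∧ (M = ⊥ ∨ M ∈ l) := by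
  induction l with
  | nil => exact ⟨⊥, by simp, Or.inl rfl⟩
  | cons a l ih =>
    obtain ⟨M, hM, hM2⟩ := ih
    rcases wble_total r a M with h | h
    · refine ⟨M, fun x hx => ?_, ?_⟩
      · rcases List.mem_cons.1 hx with rfl | hx
        · exact h
        · exact hM x hx
      · rcases hM2 with h2 | h2
        · exact Or.inl h2
        · exact Or.inr (List.mem_cons_of_mem _ h2)
    · refine ⟨a, fun x hx => ?_, Or.inr (List.mem_cons_self)⟩
      rcases List.mem_cons.1 hx with rfl | hx
      · exact wble_refl r _
      · exact wble_trans r (hM x hx) h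

lemma sum_update_two {ι : Type*} [Fintype ι] [DecidableEq ι] {A : Type*} [AddCommGroup A]
    (F : ι → A) {i j : ι} (hij : i ≠ j) (a b : A) :
    ∑ k, Function.update (Function.update F i a) j b k
      = (∑ k, F k) - F i - F j + a + b := by
  classical
  rw [Finset.sum_update_of_mem (Finset.mem_univ j)]
  have hi : i ∈ Finset.univ \ {j} := by simp [hij]
  rw [Finset.sum_update_of_mem hi]
  have h1 : ∑ k, F k = F j + ∑ k ∈ Finset.univ \ {j}, F k := by
    rw [Finset.sum_eq_add_sum_sdiff_singleton_of_mem (Finset.mem_univ j)]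
  have h2 : ∑ k ∈ Finset.univ \ {j}, F k = F i + ∑ k ∈ (Finset.univ \ {j}) \ {i}, F k := by
    rw [Finset.sum_eq_add_sum_sdiff_singleton_of_mem hi]
  rw [h1, h2]
  abel

end Util

end Det

namespace Det

section Helper
variable {K : Type*} [Field K] {n m : ℕ} (o1 : MonOrd n) (o2 : ModOrd n m)

lemma lppMW_smul_lpp_eq_pmul (hpot : IsPOT o1 o2) {p : MvPolynomial (Fin n) K}
    (hp : p ≠ 0) (v : ModElem K n m) :
    lppMW o2 (smulPP (lpp o1 p) v) = lppMW o2 (pmul p v) := by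
  rcases eq_or_ne v 0 with rfl | hv
  · rw [smul_zero', pmul_zero_right]
  obtain ⟨i₀, hvi, hvc⟩ := lppMW_char o1 o2 hpot hv
  rw [lppMW_smul_eq o1 o2 hpot _ hvi hvc, lppMW_pmul o1 o2 hpot hp hvi hvc]

end Helper

section Surgery
variable {K : Type*} [Field K] {n m : ℕ} (o1 : MonOrd n) (o2 : ModOrd n m)

set_option maxHeartbeats 2000000 in
lemma surgeryCrit (hpot : IsPOT o1 o2)
    (G : Set (MvPolynomial (Fin n) K × ModElem K n m))
    (later : (MvPolynomial (Fin n) K × ModElem K n m) →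
      (MvPolynomial (Fin n) K × ModElem K n m) → Prop)
    (u : ModElem K n m)
    (hyp : ∀ p ∈ G, ∀ q ∈ G, IsCritPairL o1 o2 later p q →
      wbleM o2 (lppMW o2 (smulPP (tf o1 p.1 q.1) p.2)) (lppMW o2 u) →
      HasStdRep o1 o2 G (sPolyF o1 p q) (sPolyU o1 p q))
    {ι : Type} [Fintype ι] [DecidableEq ι]
    (p : ι → MvPolynomial (Fin n) K)
    (q : ι → MvPolynomial (Fin n) K × ModElem K n m)
    (hmem : ∀ k, q k ∈ G)
    (hsig : ∀ k, wble o2.ord (lppMW o2 (pmul (p k) ((q k).2))) (lppMW o2 u))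
    (T : PP n)
    (hbound : ∀ k, wble o1.ord (lppW o1 (p k * (q k).1)) ((T : WithBot (PP n))))
    {i j : ι} (hij : i ≠ j)
    (hiT : lppW o1 (p i * (q i).1) = (T : WithBot (PP n)))
    (hjT : lppW o1 (p j * (q j).1) = (T : WithBot (PP n)))
    (hcrit : IsCritPairL o1 o2 later (q i) (q j))
    (A : Finset ι) (hA : ∀ k, lppW o1 (p k * (q k).1) = (T : WithBot (PP n)) → k ∈ A) :
    ∃ (ι' : Type) (_ : Fintype ι') (p' : ι' → MvPolynomial (Fin n) K)
      (q' : ι' → MvPolynomial (Fin n) K × ModElem K n m) (E : Finset ι'),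
      (∀ k, q' k ∈ G) ∧
      (∑ k, p' k * (q' k).1) = (∑ k, p k * (q k).1) ∧
      (∀ k, wble o2.ord (lppMW o2 (pmul (p' k) ((q' k).2))) (lppMW o2 u)) ∧
      (∀ k, wble o1.ord (lppW o1 (p' k * (q' k).1)) ((T : WithBot (PP n)))) ∧
      (∀ k, lppW o1 (p' k * (q' k).1) = (T : WithBot (PP n)) → k ∈ E) ∧
      E.card < A.card := by
  classical
  -- basic nonvanishing
  have hpgi : p i * (q i).1 ≠ 0 := by
    intro h0; rw [h0, (lppW_eq_bot o1).2 rfl] at hiT; exact WithBot.bot_ne_coe hiT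
  have hpgj : p j * (q j).1 ≠ 0 := by
    intro h0; rw [h0, (lppW_eq_bot o1).2 rfl] at hjT; exact WithBot.bot_ne_coe hjT
  have hpi : p i ≠ 0 := left_ne_zero_of_mul hpgi
  have hpj : p j ≠ 0 := left_ne_zero_of_mul hpgj
  have hg : (q i).1 ≠ 0 := right_ne_zero_of_mul hpgi
  have hh : (q j).1 ≠ 0 := right_ne_zero_of_mul hpgj
  set g := (q i).1 with hgdef
  set h := (q j).1 with hhdef
  set v := (q i).2 with hvdef
  set w := (q j).2 with hwdef
  set a := lpp o1 g with hadef
  set b := lpp o1 h with hbdef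
  set L : PP n := a ⊔ b with hLdef
  set tg := tf o1 g h with htgdef
  set th := tf o1 h g with hthdef
  have hag : a + tg = L := tf_add_left o1 g h
  have hbh : b + th = L := by
    have := tf_add_left o1 h g
    rw [sup_comm] at this
    exact this
  -- decompose T
  have hiT' : lpp o1 (p i) + a = T := by
    have := lppW_mul o1 hpi hg
    rw [hiT] at this
    exact (WithBot.coe_inj.1 this.symm)
  have hjT' : lpp o1 (p j) + b = T := by
    have := lppW_mul o1 hpj hh
    rw [hjT] at this
    exact (WithBot.coe_inj.1 this.symm)
  have hLT : L ≤ T := by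
    refine sup_le ?_ ?_
    · rw [← hiT']; exact le_add_self
    · rw [← hjT']; exact le_add_self
  set σ : PP n := T - L with hσdef
  have hσL : σ + L = T := by
    rw [hσdef, add_comm]
    exact add_tsub_cancel_of_le hLT
  have hpi_lpp : lpp o1 (p i) = σ + tg := by
    refine pp_add_right_cancel (c := a) ?_
    rw [hiT', add_assoc, add_comm tg a, hag, hσL]
  have hpj_lpp : lpp o1 (p j) = σ + th := by
    refine pp_add_right_cancel (c := b) ?_
    rw [hjT', add_assoc, add_comm th b, hbh, hσL]
  -- signature chains
  have hsmulv : lppMW o2 (smulPP σ (smulPP tg v)) = lppMW o2 (pmul (p i) v) := by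
    rw [smulPP_smulPP, ← hpi_lpp, lppMW_smul_lpp_eq_pmul o1 o2 hpot hpi]
  have hsv : wble o2.ord (lppMW o2 (smulPP tg v)) (lppMW o2 u) := by
    refine wble_trans o2.ord (lppMW_le_smul o1 o2 hpot σ _) ?_
    rw [hsmulv]
    exact hsig i
  have hcritle : wble o2.ord (lppMW o2 (smulPP th w)) (lppMW o2 (smulPP tg v)) := by
    rcases hcrit.2.2 with hlt | heq
    · rw [wbltM_eq] at hlt
      exact wble_of_lt o2.ord hlt
    · rw [show lppMW o2 (smulPP tg v) = lppMW o2 (smulPP th w) from heq.1]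
      exact wble_refl o2.ord _
  -- standard representation of the S-polynomial
  obtain ⟨s', p', q', hmem', hsum', hlpp', hsig'⟩ :=
    hyp (q i) (hmem i) (q j) (hmem j) hcrit hsv
  set ci := lc o1 (p i) with hcidef
  set c := lc o1 g / lc o1 h with hcdef
  set P1 : MvPolynomial (Fin n) K := p i - MvPolynomial.monomial (lpp o1 (p i)) ci with hP1def
  set P2 : MvPolynomial (Fin n) K := p j + MvPolynomial.monomial (σ + th) (ci * c) with hP2def
  set np : ι → MvPolynomial (Fin n) K :=
    Function.update (Function.update p i P1) j P2 with hnpdef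
  refine ⟨ι ⊕ Fin s', inferInstance,
    Sum.elim np (fun k => MvPolynomial.monomial σ ci * p' k),
    Sum.elim q q', (A.erase i).image Sum.inl, ?_, ?_, ?_, ?_, ?_, ?_⟩
  · rintro (k | k)
    · exact hmem k
    · exact hmem' k
  -- the sum identity
  · rw [Fintype.sum_sum_type]
    simp only [Sum.elim_inl, Sum.elim_inr]
    have hfun : (fun k => np k * (q k).1) =
        Function.update (Function.update (fun k => p k * (q k).1) i (P1 * g)) j (P2 * h) := by
      funext k
      rcases eq_or_ne k j with rfl | hkj
      · rw [hnpdef]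
        rw [Function.update_self, Function.update_self]
      · rw [hnpdef, Function.update_of_ne hkj, Function.update_of_ne hkj]
        rcases eq_or_ne k i with rfl | hki
        · rw [Function.update_self, Function.update_self]
        · rw [Function.update_of_ne hki, Function.update_of_ne hki]
    have hsum2 : ∑ k, np k * (q k).1 =
        (∑ k, p k * (q k).1) - p i * g - p j * h + P1 * g + P2 * h := by
      rw [show ∑ k, np k * (q k).1 = ∑ k, (fun k => np k * (q k).1) k from rfl, hfun]
      exact sum_update_two _ hij _ _
    have hsum3 : ∑ k, (MvPolynomial.monomial σ ci * p' k) * (q' k).1 =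
        MvPolynomial.monomial σ ci * sPolyF o1 (q i) (q j) := by
      rw [hsum', Finset.mul_sum]
      refine Finset.sum_congr rfl (fun k _ => ?_)
      rw [mul_assoc]
    rw [hsum2, hsum3, sPolyF_eq]
    have e1 : MvPolynomial.monomial σ ci *
        (MvPolynomial.monomial (tf o1 (q i).1 (q j).1) (1:K) * (q i).1) =
        MvPolynomial.monomial (lpp o1 (p i)) ci * g := by
      rw [← mul_assoc, MvPolynomial.monomial_mul, mul_one, ← hgdef, ← hhdef, ← htgdef, hpi_lpp]
    have e2 : MvPolynomial.monomial σ ci *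
        (MvPolynomial.monomial (tf o1 (q j).1 (q i).1) (lc o1 (q i).1 / lc o1 (q j).1) * (q j).1) =
        MvPolynomial.monomial (σ + th) (ci * c) * h := by
      rw [← mul_assoc, MvPolynomial.monomial_mul, ← hgdef, ← hhdef, ← hthdef, ← hcdef]
    rw [mul_sub, e1, e2, hP1def, hP2def]
    ring
  -- the signature condition
  · rintro (k | k)
    · simp only [Sum.elim_inl]
      rcases eq_or_ne k j with rfl | hkj
      · rw [hnpdef, Function.update_self, hP2def, pmul_add_left]
        refine lppMW_add_le o2 (hsig k) ?_
        refine wble_trans o2.ord (lppMW_monc_le o1 o2 hpot _ _ _) ?_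
        rw [← smulPP_smulPP]
        refine wble_trans o2.ord (lppMW_smul_mono o1 o2 hpot σ hcritle) ?_
        rw [hsmulv]
        exact hsig i
      · rw [hnpdef, Function.update_of_ne hkj]
        rcases eq_or_ne k i with rfl | hki
        · rw [Function.update_self, hP1def, pmul_sub_left]
          refine lppMW_sub_le o2 (hsig k) ?_
          refine wble_trans o2.ord (lppMW_monc_le o1 o2 hpot _ _ _) ?_
          rw [lppMW_smul_lpp_eq_pmul o1 o2 hpot hpi]
          exact hsig k
        · rw [Function.update_of_ne hki]
          exact hsig k
    · simp only [Sum.elim_inr]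
      rw [pmul_pmul]
      refine wble_trans o2.ord (lppMW_monc_le o1 o2 hpot _ _ _) ?_
      have h1 : wble o2.ord (lppMW o2 (pmul (p' k) ((q' k).2))) (lppMW o2 (sPolyU o1 (q i) (q j))) := by
        have := hsig' k
        rwa [wbleM_eq] at this
      refine wble_trans o2.ord (lppMW_smul_mono o1 o2 hpot σ h1) ?_
      refine wble_trans o2.ord (lppMW_smul_mono o1 o2 hpot σ
        (lppMW_sPolyU_le o1 o2 hpot hcritle)) ?_
      rw [hsmulv]
      exact hsig i
  -- the degree bound
  · rintro (k | k)
    · simp only [Sum.elim_inl]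
      rcases eq_or_ne k j with rfl | hkj
      · rw [hnpdef, Function.update_self, hP2def, add_mul]
        refine lppW_add_le o1 (hbound k) ?_
        have : wble o1.ord (lppW o1 (MvPolynomial.monomial (σ + th) (ci * c) * h))
            ((((σ + th) + b : PP n)) : WithBot (PP n)) := by
          refine lppW_monmul_le o1 ?_
          rw [lppW_coe o1 hh]
          exact wble_refl o1.ord _
        rw [add_assoc, add_comm th b, hbh, hσL] at this
        exact this
      · rw [hnpdef, Function.update_of_ne hkj]
        rcases eq_or_ne k i with rfl | hki
        · rw [Function.update_self]
          refine wble_of_lt o1.ord ?_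
          rcases eq_or_ne P1 0 with hP0 | hP0
          · rw [hP0, zero_mul, (lppW_eq_bot o1).2 rfl]
            exact wblt_bot_coe o1.ord T
          · rw [lppW_mul o1 hP0 hg, wblt_coe_iff]
            have htail : o1.ord.lt (lpp o1 P1) (lpp o1 (p k)) := by
              have := lppW_tail o1 hpi
              rw [← hcidef, ← hP1def, lppW_coe o1 hP0, wblt_coe_iff] at this
              exact this
            have := padd_lt_right o1 a htail
            rwa [hiT'] at this
        · rw [Function.update_of_ne hki]
          exact hbound k
    · simp only [Sum.elim_inr]
      refine wble_of_lt o1.ord ?_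
      rw [mul_assoc]
      have hk : wblt o1.ord (lppW o1 (p' k * (q' k).1)) ((L : PP n) : WithBot (PP n)) := by
        refine wblt_of_le_of_lt o1.ord ?_ (lppW_sPolyF_lt o1 hg hh)
        have := hlpp' k
        rwa [wbleP_eq] at this
      have := lppW_monmul_lt o1 (t := σ) (c := ci) hk
      rwa [hσL] at this
  -- the attaining set shrinks
  · rintro (k | k) hk
    · simp only [Sum.elim_inl] at hk
      rcases eq_or_ne k i with rfl | hki
      · exfalso
        rcases eq_or_ne k j with rfl | hkj
        · exact hij rfl
        · rw [hnpdef, Function.update_of_ne hkj, Function.update_self] at hk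
          refine wble_ne_of_lt o1.ord ?_ hk
          rcases eq_or_ne P1 0 with hP0 | hP0
          · rw [hP0, zero_mul, (lppW_eq_bot o1).2 rfl]
            exact wblt_bot_coe o1.ord T
          · rw [lppW_mul o1 hP0 hg, wblt_coe_iff]
            have htail : o1.ord.lt (lpp o1 P1) (lpp o1 (p k)) := by
              have := lppW_tail o1 hpi
              rw [← hcidef, ← hP1def, lppW_coe o1 hP0, wblt_coe_iff] at this
              exact this
            have := padd_lt_right o1 a htail
            rwa [hiT'] at this
      · refine Finset.mem_image.2 ⟨k, Finset.mem_erase.2 ⟨hki, ?_⟩, rfl⟩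
        rcases eq_or_ne k j with rfl | hkj
        · exact hA k hjT
        · rw [hnpdef, Function.update_of_ne hkj, Function.update_of_ne hki] at hk
          exact hA k hk
    · exfalso
      simp only [Sum.elim_inr] at hk
      rw [mul_assoc] at hk
      have hk2 : wblt o1.ord (lppW o1 (p' k * (q' k).1)) ((L : PP n) : WithBot (PP n)) := by
        refine wblt_of_le_of_lt o1.ord ?_ (lppW_sPolyF_lt o1 hg hh)
        have := hlpp' k
        rwa [wbleP_eq] at this
      have := lppW_monmul_lt o1 (t := σ) (c := ci) hk2
      rw [hσL] at this
      exact wble_ne_of_lt o1.ord this hk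
  · rw [Finset.card_image_of_injective _ Sum.inl_injective]
    have hiA : i ∈ A := hA i hiT
    rw [Finset.card_erase_of_mem hiA]
    have : 0 < A.card := Finset.card_pos.2 ⟨i, hiA⟩
    omega

end Surgery

end Det

namespace Det

section Surgery2
variable {K : Type*} [Field K] {n m : ℕ} (o1 : MonOrd n) (o2 : ModOrd n m)

lemma wblt_of_not_wble {α : Type*} (r : LinearOrder α) {a b : WithBot α}
    (h : ¬ wble r a b) : wblt r b a := by
  letI := r; exact lt_of_not_ge h

lemma coeff_ne_zero_of_attain {T : PP n} {x : MvPolynomial (Fin n) K}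
    (h : lppW o1 x = (T : WithBot (PP n))) : MvPolynomial.coeff T x ≠ 0 := by
  have hx : x ≠ 0 := by
    intro h0; rw [h0, (lppW_eq_bot o1).2 rfl] at h; exact WithBot.bot_ne_coe h
  have : lpp o1 x = T := lpp_eq_of_lppW o1 h
  rw [← this]
  exact lc_ne_zero o1 hx

lemma surgeryMerge
    (G : Set (MvPolynomial (Fin n) K × ModElem K n m))
    (u : ModElem K n m)
    {ι : Type} [Fintype ι] [DecidableEq ι]
    (p : ι → MvPolynomial (Fin n) K)
    (q : ι → MvPolynomial (Fin n) K × ModElem K n m)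
    (hmem : ∀ k, q k ∈ G)
    (hsig : ∀ k, wble o2.ord (lppMW o2 (pmul (p k) ((q k).2))) (lppMW o2 u))
    (T : PP n)
    (hbound : ∀ k, wble o1.ord (lppW o1 (p k * (q k).1)) ((T : WithBot (PP n))))
    {i j : ι} (hij : i ≠ j)
    (hiT : lppW o1 (p i * (q i).1) = (T : WithBot (PP n)))
    (hjT : lppW o1 (p j * (q j).1) = (T : WithBot (PP n)))
    (hqij : q i = q j)
    (A : Finset ι) (hA : ∀ k, lppW o1 (p k * (q k).1) = (T : WithBot (PP n)) → k ∈ A) :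
    ∃ (ι' : Type) (_ : Fintype ι') (p' : ι' → MvPolynomial (Fin n) K)
      (q' : ι' → MvPolynomial (Fin n) K × ModElem K n m) (E : Finset ι'),
      (∀ k, q' k ∈ G) ∧
      (∑ k, p' k * (q' k).1) = (∑ k, p k * (q k).1) ∧
      (∀ k, wble o2.ord (lppMW o2 (pmul (p' k) ((q' k).2))) (lppMW o2 u)) ∧
      (∀ k, wble o1.ord (lppW o1 (p' k * (q' k).1)) ((T : WithBot (PP n)))) ∧
      (∀ k, lppW o1 (p' k * (q' k).1) = (T : WithBot (PP n)) → k ∈ E) ∧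
      E.card < A.card := by
  classical
  set np : ι → MvPolynomial (Fin n) K :=
    Function.update (Function.update p i (p i + p j)) j 0 with hnpdef
  refine ⟨ι, inferInstance, np, q, A.erase j, hmem, ?_, ?_, ?_, ?_, ?_⟩
  · have hfun : (fun k => np k * (q k).1) =
        Function.update (Function.update (fun k => p k * (q k).1) i ((p i + p j) * (q i).1))
          j (0 * (q j).1) := by
      funext k
      rcases eq_or_ne k j with rfl | hkj
      · rw [hnpdef, Function.update_self, Function.update_self]
      · rw [hnpdef, Function.update_of_ne hkj, Function.update_of_ne hkj]
        rcases eq_or_ne k i with rfl | hki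
        · rw [Function.update_self, Function.update_self]
        · rw [Function.update_of_ne hki, Function.update_of_ne hki]
    rw [show ∑ k, np k * (q k).1 = ∑ k, (fun k => np k * (q k).1) k from rfl, hfun,
      sum_update_two _ hij]
    rw [hqij]
    ring
  · intro k
    rcases eq_or_ne k j with rfl | hkj
    · rw [hnpdef, Function.update_self, pmul_zero_left, (lppMW_eq_bot o2).2 rfl]
      exact wble_bot o2.ord _
    · rw [hnpdef, Function.update_of_ne hkj]
      rcases eq_or_ne k i with rfl | hki
      · rw [Function.update_self, pmul_add_left]
        refine lppMW_add_le o2 (hsig k) ?_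
        rw [hqij]
        exact hsig j
      · rw [Function.update_of_ne hki]
        exact hsig k
  · intro k
    rcases eq_or_ne k j with rfl | hkj
    · rw [hnpdef, Function.update_self, zero_mul, (lppW_eq_bot o1).2 rfl]
      exact wble_bot o1.ord _
    · rw [hnpdef, Function.update_of_ne hkj]
      rcases eq_or_ne k i with rfl | hki
      · rw [Function.update_self, add_mul]
        refine lppW_add_le o1 (hbound k) ?_
        rw [hqij]
        exact hbound j
      · rw [Function.update_of_ne hki]
        exact hbound k
  · intro k hk
    rcases eq_or_ne k j with rfl | hkj
    · exfalso
      rw [hnpdef, Function.update_self, zero_mul, (lppW_eq_bot o1).2 rfl] at hk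
      exact WithBot.bot_ne_coe hk
    · exact Finset.mem_erase.2 ⟨hkj, by
        rcases eq_or_ne k i with rfl | hki
        · exact hA k hiT
        · rw [hnpdef, Function.update_of_ne hkj, Function.update_of_ne hki] at hk
          exact hA k hk⟩
  · have hjA : j ∈ A := hA j hjT
    rw [Finset.card_erase_of_mem hjA]
    have : 0 < A.card := Finset.card_pos.2 ⟨j, hjA⟩
    omega

lemma hasStdRep_of_fintype
    (G : Set (MvPolynomial (Fin n) K × ModElem K n m))
    (f : MvPolynomial (Fin n) K) (u : ModElem K n m)
    {ι : Type} [Fintype ι]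
    (p : ι → MvPolynomial (Fin n) K)
    (q : ι → MvPolynomial (Fin n) K × ModElem K n m)
    (hmem : ∀ k, q k ∈ G)
    (hsum : f = ∑ k, p k * (q k).1)
    (hlppW : ∀ k, wble o1.ord (lppW o1 (p k * (q k).1)) (lppW o1 f))
    (hsig : ∀ k, wble o2.ord (lppMW o2 (pmul (p k) ((q k).2))) (lppMW o2 u)) :
    HasStdRep o1 o2 G f u := by
  classical
  obtain e := Fintype.equivFin ι
  refine ⟨Fintype.card ι, p ∘ e.symm, q ∘ e.symm, fun k => hmem _, ?_,
    fun k => hlppW _, fun k => hsig _⟩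
  rw [hsum]
  exact (Equiv.sum_comp e.symm (fun k => p k * (q k).1)).symm

end Surgery2

end Det

namespace Det

lemma sig_eVec {K : Type*} [Field K] {n m : ℕ} (o2 : ModOrd n m)
    (u : ModElem K n m) (i : Fin m) :
    wble o2.ord (lppMW o2 (pmul (u i) (eVec i))) (lppMW o2 u) := by
  classical
  refine lppMW_le_of_forall o2 (fun a ha => ?_)
  refine coe_le_lppMW o2 ?_
  rw [mem_msupport] at ha ⊢
  rcases eq_or_ne a.2 i with hi | hi
  · have : (pmul (u i) (eVec i)) a.2 = u a.2 := by
      show u i * eVec i a.2 = u a.2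
      rw [eVec, if_pos hi, mul_one, hi]
    rwa [this] at ha
  · have : (pmul (u i) (eVec i)) a.2 = 0 := by
      show u i * eVec i a.2 = 0
      rw [eVec, if_neg hi, mul_zero]
    rw [this, MvPolynomial.support_zero] at ha
    exact absurd ha (Finset.notMem_empty _)

end Det

/-- (Lemma on standard representations.) Let `≺₂` be the position-over-term
extension of `≺₁`, `G` a finite set of labeled polynomials of `I` containing all `fᵢ^[eᵢ]`,
and `f^[u]` a labeled polynomial of `I`. If for every critical pair `(t_p, p, t_q, q)` of `G`
with `lpp(u) ⪰ lpp(t_p · p.2)` the S-polynomial of that pair has a standard representation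
w.r.t. `G`, then `f^[u]` has a standard representation w.r.t. `G`. -/
theorem detachability_stmt11 {K : Type*} [Field K] {n m : ℕ}
    (o1 : MonOrd n) (o2 : ModOrd n m) (hpot : IsPOT o1 o2)
    (F : Fin m → MvPolynomial (Fin n) K)
    (G : Set (MvPolynomial (Fin n) K × ModElem K n m)) (hfin : G.Finite)
    (hlab : ∀ p ∈ G, p.1 = dotF p.2 F)
    (later : (MvPolynomial (Fin n) K × ModElem K n m) →
      (MvPolynomial (Fin n) K × ModElem K n m) → Prop)
    (hsto : StrictTotalOn G later)
    (hFmem : ∀ i : Fin m, (F i, eVec i) ∈ G)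
    (f : MvPolynomial (Fin n) K) (u : ModElem K n m) (hfu : f = dotF u F)
    (hyp : ∀ p ∈ G, ∀ q ∈ G, IsCritPairL o1 o2 later p q →
      wbleM o2 (lppMW o2 (smulPP (tf o1 p.1 q.1) p.2)) (lppMW o2 u) →
      HasStdRep o1 o2 G (sPolyF o1 p q) (sPolyU o1 p q)) :
    HasStdRep o1 o2 G f u := by

  classical
  have wfWB : WellFounded (Det.wblt o1.ord (α := PP n)) :=
    (@WithBot.instWellFoundedLT (PP n) o1.ord.toLT ⟨o1.wf⟩).wf
  have key : ∀ M : WithBot (PP n), ∀ c : ℕ,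
      ∀ (ι : Type) (_ : Fintype ι) (_ : DecidableEq ι)
        (p : ι → MvPolynomial (Fin n) K)
        (q : ι → MvPolynomial (Fin n) K × ModElem K n m) (A : Finset ι),
        (∀ k, q k ∈ G) → (f = ∑ k, p k * (q k).1) →
        (∀ k, Det.wble o2.ord (lppMW o2 (pmul (p k) ((q k).2))) (lppMW o2 u)) →
        (∀ k, Det.wble o1.ord (lppW o1 (p k * (q k).1)) M) →
        (∀ k, lppW o1 (p k * (q k).1) = M → k ∈ A) → A.card ≤ c →
        HasStdRep o1 o2 G f u := by
    intro M0
    refine WellFounded.induction wfWB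
      (C := fun M => ∀ c : ℕ,
        ∀ (ι : Type) (_ : Fintype ι) (_ : DecidableEq ι)
          (p : ι → MvPolynomial (Fin n) K)
          (q : ι → MvPolynomial (Fin n) K × ModElem K n m) (A : Finset ι),
          (∀ k, q k ∈ G) → (f = ∑ k, p k * (q k).1) →
          (∀ k, Det.wble o2.ord (lppMW o2 (pmul (p k) ((q k).2))) (lppMW o2 u)) →
          (∀ k, Det.wble o1.ord (lppW o1 (p k * (q k).1)) M) →
          (∀ k, lppW o1 (p k * (q k).1) = M → k ∈ A) → A.card ≤ c →
          HasStdRep o1 o2 G f u) M0 ?_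
    intro M ihM c
    induction c with
    | zero =>
      intro ι instF instD p q A hmem hsum hsig hbound hA hcard
      by_cases hMle : Det.wble o1.ord M (lppW o1 f)
      · exact Det.hasStdRep_of_fintype o1 o2 G f u p q hmem hsum
          (fun k => Det.wble_trans o1.ord (hbound k) hMle) hsig
      have hlt := Det.wblt_of_not_wble o1.ord hMle
      have hMne : M ≠ ⊥ := by
        intro h0
        rw [h0] at hlt
        exact Det.not_wblt_of_le o1.ord (Det.wble_bot o1.ord _) hlt
      obtain ⟨T, rfl⟩ := WithBot.ne_bot_iff_exists.1 hMne
      by_cases hone : ∃ i, lppW o1 (p i * (q i).1) = (T : WithBot (PP n))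
      · obtain ⟨i, hi⟩ := hone
        have : i ∈ A := hA i hi
        have : 0 < A.card := Finset.card_pos.2 ⟨i, this⟩
        omega
      · obtain ⟨M', hM'all, hM'mem⟩ := Det.exists_strict_bound o1.ord
          ((Finset.univ.toList (α := ι)).map (fun k => lppW o1 (p k * (q k).1)))
        have hvals : ∀ k, Det.wble o1.ord (lppW o1 (p k * (q k).1)) M' := fun k =>
          hM'all _ (List.mem_map.2 ⟨k, Finset.mem_toList.2 (Finset.mem_univ k), rfl⟩)
        have hM'lt : Det.wblt o1.ord M' ((T : WithBot (PP n))) := by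
          rcases hM'mem with rfl | hmem'
          · exact Det.wblt_bot_coe o1.ord T
          · obtain ⟨k, -, hk⟩ := List.mem_map.1 hmem'
            rw [← hk]
            exact Det.wblt_of_le_of_ne o1.ord (hbound k) (fun h0 => hone ⟨k, h0⟩)
        exact ihM M' hM'lt (Fintype.card ι) ι instF instD p q Finset.univ hmem hsum hsig
          hvals (fun k _ => Finset.mem_univ k) (le_of_eq Finset.card_univ)
    | succ c ihc =>
      intro ι instF instD p q A hmem hsum hsig hbound hA hcard
      by_cases hMle : Det.wble o1.ord M (lppW o1 f)
      · exact Det.hasStdRep_of_fintype o1 o2 G f u p q hmem hsum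
          (fun k => Det.wble_trans o1.ord (hbound k) hMle) hsig
      have hlt := Det.wblt_of_not_wble o1.ord hMle
      have hMne : M ≠ ⊥ := by
        intro h0
        rw [h0] at hlt
        exact Det.not_wblt_of_le o1.ord (Det.wble_bot o1.ord _) hlt
      obtain ⟨T, rfl⟩ := WithBot.ne_bot_iff_exists.1 hMne
      by_cases hex : ∃ i j, i ≠ j ∧ lppW o1 (p i * (q i).1) = (T : WithBot (PP n)) ∧
          lppW o1 (p j * (q j).1) = (T : WithBot (PP n))
      · obtain ⟨i, j, hij, hiT, hjT⟩ := hex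
        have hstep : ∃ (ι' : Type) (_ : Fintype ι') (p' : ι' → MvPolynomial (Fin n) K)
            (q' : ι' → MvPolynomial (Fin n) K × ModElem K n m) (E : Finset ι'),
            (∀ k, q' k ∈ G) ∧
            (∑ k, p' k * (q' k).1) = (∑ k, p k * (q k).1) ∧
            (∀ k, Det.wble o2.ord (lppMW o2 (pmul (p' k) ((q' k).2))) (lppMW o2 u)) ∧
            (∀ k, Det.wble o1.ord (lppW o1 (p' k * (q' k).1)) ((T : WithBot (PP n)))) ∧
            (∀ k, lppW o1 (p' k * (q' k).1) = (T : WithBot (PP n)) → k ∈ E) ∧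
            E.card < A.card := by
          by_cases hq : q i = q j
          · exact Det.surgeryMerge o1 o2 G u p q hmem hsig T hbound hij hiT hjT hq A hA
          · have hpgi : p i * (q i).1 ≠ 0 := by
              intro h0
              rw [h0, (Det.lppW_eq_bot o1).2 rfl] at hiT
              exact WithBot.bot_ne_coe hiT
            have hpgj : p j * (q j).1 ≠ 0 := by
              intro h0
              rw [h0, (Det.lppW_eq_bot o1).2 rfl] at hjT
              exact WithBot.bot_ne_coe hjT
            have hg : (q i).1 ≠ 0 := right_ne_zero_of_mul hpgi
            have hh : (q j).1 ≠ 0 := right_ne_zero_of_mul hpgj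
            rcases Det.wblt_trichotomy o2.ord
                (lppMW o2 (smulPP (tf o1 (q j).1 (q i).1) ((q j).2)))
                (lppMW o2 (smulPP (tf o1 (q i).1 (q j).1) ((q i).2))) with hYX | hYX | hYX
            · exact Det.surgeryCrit o1 o2 hpot G later u hyp p q hmem hsig T hbound hij
                hiT hjT ⟨hg, hh, Or.inl hYX⟩ A hA
            · rcases hsto.2.2 (q i) (hmem i) (q j) (hmem j) hq with hl | hl
              · exact Det.surgeryCrit o1 o2 hpot G later u hyp p q hmem hsig T hbound hij.symm
                  hjT hiT ⟨hh, hg, Or.inr ⟨hYX, hl⟩⟩ A hA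
              · exact Det.surgeryCrit o1 o2 hpot G later u hyp p q hmem hsig T hbound hij
                  hiT hjT ⟨hg, hh, Or.inr ⟨hYX.symm, hl⟩⟩ A hA
            · exact Det.surgeryCrit o1 o2 hpot G later u hyp p q hmem hsig T hbound hij.symm
                hjT hiT ⟨hh, hg, Or.inl hYX⟩ A hA
        obtain ⟨ι', instF', p', q', E, hmem', hsum', hsig', hbound', hE, hcard'⟩ := hstep
        have hcard'' : E.card ≤ c := by omega
        exact ihc ι' instF' (Classical.decEq ι') p' q' E hmem' (hsum.trans hsum'.symm)
          hsig' hbound' hE hcard''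
      · by_cases hone : ∃ i, lppW o1 (p i * (q i).1) = (T : WithBot (PP n))
        · exfalso
          obtain ⟨i0, hi0⟩ := hone
          have hcoefff : MvPolynomial.coeff T f = 0 := Det.coeff_eq_zero_of_lppW_lt o1 hlt
          have heq : MvPolynomial.coeff T f = MvPolynomial.coeff T (p i0 * (q i0).1) := by
            rw [hsum, MvPolynomial.coeff_sum]
            refine Finset.sum_eq_single i0 (fun k _ hk => ?_)
              (fun h => absurd (Finset.mem_univ _) h)
            have hknot : lppW o1 (p k * (q k).1) ≠ (T : WithBot (PP n)) :=
              fun h0 => hex ⟨k, i0, hk, h0, hi0⟩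
            exact Det.coeff_eq_zero_of_lppW_lt o1
              (Det.wblt_of_le_of_ne o1.ord (hbound k) hknot)
          exact Det.coeff_ne_zero_of_attain o1 hi0 (by rw [← heq]; exact hcoefff)
        · obtain ⟨M', hM'all, hM'mem⟩ := Det.exists_strict_bound o1.ord
            ((Finset.univ.toList (α := ι)).map (fun k => lppW o1 (p k * (q k).1)))
          have hvals : ∀ k, Det.wble o1.ord (lppW o1 (p k * (q k).1)) M' := fun k =>
            hM'all _ (List.mem_map.2 ⟨k, Finset.mem_toList.2 (Finset.mem_univ k), rfl⟩)
          have hM'lt : Det.wblt o1.ord M' ((T : WithBot (PP n))) := by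
            rcases hM'mem with rfl | hmem'
            · exact Det.wblt_bot_coe o1.ord T
            · obtain ⟨k, -, hk⟩ := List.mem_map.1 hmem'
              rw [← hk]
              exact Det.wblt_of_le_of_ne o1.ord (hbound k) (fun h0 => hone ⟨k, h0⟩)
          exact ihM M' hM'lt (Fintype.card ι) ι instF instD p q Finset.univ hmem hsum hsig
            hvals (fun k _ => Finset.mem_univ k) (le_of_eq Finset.card_univ)
  obtain ⟨M0, hM0all, -⟩ := Det.exists_strict_bound o1.ord
    ((Finset.univ.toList (α := Fin m)).map
      (fun k => lppW o1 (u k * ((F k, eVec k) : MvPolynomial (Fin n) K × ModElem K n m).1)))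
  refine key M0 (Fintype.card (Fin m)) (Fin m) inferInstance inferInstance
    (fun i => u i) (fun i => (F i, eVec i)) Finset.univ (fun i => hFmem i) hfu
    (fun k => Det.sig_eVec o2 u k) ?_ (fun k _ => Finset.mem_univ k)
    (le_of_eq Finset.card_univ)
  intro k
  exact hM0all _ (List.mem_map.2 ⟨k, Finset.mem_toList.2 (Finset.mem_univ k), rfl⟩)
end
end

section
/- If a labeled polynomial f^[u] of I with f ≠ 0 has a standard representation with respect to a set B of labeled polynomials of I, then there exists g^[v] ∈ B with g ≠ 0 such that lpp(g) divides lpp(f) and lpp(t·v) ⪯ lpp(u), where t = lpp(f)/lpp(g). -/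
open MvPolynomial

noncomputable section
variable {K : Type*} [Field K] {n m : ℕ}

/-! Bridge lemmas with fully explicit order instances. -/

lemma wbP_le_max (o1 : MonOrd n) {a : PP n} {s : Finset (PP n)} (h : a ∈ s) :
    wbleP o1 ↑a (@Finset.max _ o1.ord s) := @Finset.le_max _ o1.ord a s h

lemma wbP_max_le (o1 : MonOrd n) {s : Finset (PP n)} {M : WithBot (PP n)}
    (h : ∀ a ∈ s, wbleP o1 ↑a M) : wbleP o1 (@Finset.max _ o1.ord s) M :=
  @Finset.max_le _ o1.ord M s h

lemma wbP_coe_iff (o1 : MonOrd n) {a b : PP n} : wbleP o1 ↑a ↑b ↔ o1.ord.le a b :=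
  @WithBot.coe_le_coe _ a b o1.ord.toLE

lemma wbP_antisymm (o1 : MonOrd n) {a b : WithBot (PP n)}
    (h1 : wbleP o1 a b) (h2 : wbleP o1 b a) : a = b :=
  @le_antisymm _ (@WithBot.linearOrder _ o1.ord).toPartialOrder a b h1 h2

lemma wbM_le_max (o2 : ModOrd n m) {a : MTerm n m} {s : Finset (MTerm n m)} (h : a ∈ s) :
    wbleM o2 ↑a (@Finset.max _ o2.ord s) := @Finset.le_max _ o2.ord a s h

lemma wbM_max_le (o2 : ModOrd n m) {s : Finset (MTerm n m)} {M : WithBot (MTerm n m)}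
    (h : ∀ a ∈ s, wbleM o2 ↑a M) : wbleM o2 (@Finset.max _ o2.ord s) M :=
  @Finset.max_le _ o2.ord M s h

lemma wbM_coe_iff (o2 : ModOrd n m) {a b : MTerm n m} : wbleM o2 ↑a ↑b ↔ o2.ord.le a b :=
  @WithBot.coe_le_coe _ a b o2.ord.toLE

lemma wbM_trans (o2 : ModOrd n m) {a b c : WithBot (MTerm n m)}
    (h1 : wbleM o2 a b) (h2 : wbleM o2 b c) : wbleM o2 a c :=
  @le_trans _ (@WithBot.linearOrder _ o2.ord).toPreorder a b c h1 h2

lemma wbM_bot (o2 : ModOrd n m) (x : WithBot (MTerm n m)) : wbleM o2 ⊥ x :=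
  @bot_le _ (@WithBot.instLE _ o2.ord.toLE) (@WithBot.instOrderBot _ o2.ord.toLE) x

lemma ord1_add_le (o1 : MonOrd n) (γ : PP n) {a b : PP n} (h : o1.ord.le a b) :
    o1.ord.le (γ + a) (γ + b) := by
  rcases @lt_or_eq_of_le _ o1.ord.toPartialOrder a b h with h' | h'
  · exact @le_of_lt _ o1.ord.toPreorder _ _ (o1.mul_lt γ a b h')
  · rw [h']; exact @le_refl _ o1.ord.toPreorder _

lemma ord2_add_le (o2 : ModOrd n m) (γ : PP n) {a b : MTerm n m} (h : o2.ord.le a b) :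
    o2.ord.le (mtmul γ a) (mtmul γ b) := by
  rcases @lt_or_eq_of_le _ o2.ord.toPartialOrder a b h with h' | h'
  · exact @le_of_lt _ o2.ord.toPreorder _ _ (o2.mul_lt γ a b h')
  · rw [h']; exact @le_refl _ o2.ord.toPreorder _

lemma lpp_spec (o1 : MonOrd n) {f : MvPolynomial (Fin n) K} (hf : f ≠ 0) :
    lppW o1 f = (lpp o1 f : WithBot (PP n)) ∧ lpp o1 f ∈ f.support := by
  have hne : f.support.Nonempty := MvPolynomial.support_nonempty.mpr hf
  obtain ⟨a, ha⟩ := @Finset.max_of_nonempty _ o1.ord _ hne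
  have h1 : lppW o1 f = (a : WithBot (PP n)) := ha
  have h2 : lpp o1 f = a := by rw [lpp, h1]; exact WithBot.unbotD_coe 0 a
  exact ⟨by rw [h2]; exact h1, h2 ▸ @Finset.mem_of_max _ o1.ord _ _ ha⟩

lemma lppW_mul (o1 : MonOrd n) {p g : MvPolynomial (Fin n) K} (hp : p ≠ 0) (hg : g ≠ 0) :
    lppW o1 (p * g) = ((lpp o1 p + lpp o1 g : PP n) : WithBot (PP n)) := by
  obtain ⟨hpe, hpm⟩ := lpp_spec o1 hp
  obtain ⟨hge, hgm⟩ := lpp_spec o1 hg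
  set a := lpp o1 p
  set b := lpp o1 g
  have hub_p : ∀ c ∈ p.support, o1.ord.le c a := fun c hc =>
    (wbP_coe_iff o1).mp (hpe ▸ wbP_le_max o1 hc)
  have hub_g : ∀ d ∈ g.support, o1.ord.le d b := fun d hd =>
    (wbP_coe_iff o1).mp (hge ▸ wbP_le_max o1 hd)
  have hcoeff : (p * g).coeff (a + b) = p.coeff a * g.coeff b := by
    rw [MvPolynomial.coeff_mul]
    refine Finset.sum_eq_single_of_mem (a, b) (Finset.HasAntidiagonal.mem_antidiagonal.mpr rfl) ?_
    rintro ⟨c, d⟩ hmem hne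
    have hcd : c + d = a + b := Finset.HasAntidiagonal.mem_antidiagonal.mp hmem
    by_cases hc : c ∈ p.support
    · by_cases hd : d ∈ g.support
      · exfalso
        have hca := hub_p c hc
        have hdb := hub_g d hd
        rcases @lt_or_eq_of_le _ o1.ord.toPartialOrder c a hca with hlt | heq
        · have h1 : o1.ord.lt (c + d) (a + d) := by
            have := o1.mul_lt d c a hlt
            rwa [add_comm d c, add_comm d a] at this
          have h2 : o1.ord.le (a + d) (a + b) := ord1_add_le o1 a hdb
          exact absurd hcd
            (@ne_of_lt _ o1.ord.toPreorder _ _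
              (@lt_of_lt_of_le _ o1.ord.toPreorder _ _ _ h1 h2))
        · apply hne
          have hd' : d = b := by
            apply add_left_cancel (a := a)
            rw [← heq] at hcd ⊢; exact hcd
          rw [heq, hd']
      · simp [MvPolynomial.notMem_support_iff.mp hd]
    · simp [MvPolynomial.notMem_support_iff.mp hc]
  have hmem : a + b ∈ (p * g).support := by
    rw [MvPolynomial.mem_support_iff, hcoeff]
    exact mul_ne_zero (MvPolynomial.mem_support_iff.mp hpm) (MvPolynomial.mem_support_iff.mp hgm)
  refine wbP_antisymm o1 (wbP_max_le o1 ?_) (wbP_le_max o1 hmem)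
  intro γ hγ
  obtain ⟨c, hc, d, hd, rfl⟩ := Finset.mem_add.mp (MvPolynomial.support_mul p g hγ)
  have h1 : o1.ord.le (c + d) (c + b) := ord1_add_le o1 c (hub_g d hd)
  have h2 : o1.ord.le (c + b) (a + b) := by
    have := ord1_add_le o1 b (hub_p c hc)
    rwa [add_comm b c, add_comm b a] at this
  exact (wbP_coe_iff o1).mpr (@le_trans _ o1.ord.toPreorder _ _ _ h1 h2)

lemma mem_msupport {v : ModElem K n m} {α : PP n} {i : Fin m} :
    ((α, i) : MTerm n m) ∈ msupport v ↔ α ∈ (v i).support := by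
  simp only [msupport, Finset.mem_biUnion, Finset.mem_univ, true_and, Finset.mem_image]
  constructor
  · rintro ⟨j, β, hβ, heq⟩
    obtain ⟨h1, h2⟩ := Prod.mk.injEq _ _ _ _ ▸ heq
    subst h2; rwa [← h1]
  · intro h; exact ⟨i, α, h, rfl⟩

lemma key_pmul (o2 : ModOrd n m) {p : MvPolynomial (Fin n) K} {v : ModElem K n m}
    {T : MTerm n m} (hT : lppMW o2 v = (T : WithBot (MTerm n m))) :
    ∀ α ∈ p.support, wbleM o2 ((mtmul α T : MTerm n m) : WithBot (MTerm n m))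
      (lppMW o2 (pmul p v)) := by
  intro α hα
  obtain ⟨τ, j⟩ := T
  have hTm : ((τ, j) : MTerm n m) ∈ msupport v := @Finset.mem_of_max _ o2.ord _ _ hT
  have hvT : (v j).coeff τ ≠ 0 := MvPolynomial.mem_support_iff.mp (mem_msupport.mp hTm)
  have hmemle : ∀ S ∈ msupport v, o2.ord.le S ((τ, j) : MTerm n m) := fun S hS =>
    (wbM_coe_iff o2).mp (hT ▸ wbM_le_max o2 hS)
  set A : Finset (MTerm n m) := p.support.image (fun β => mtmul β ((τ, j) : MTerm n m)) with hA
  have hAne : A.Nonempty := ⟨_, Finset.mem_image_of_mem _ hα⟩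
  set M : MTerm n m := @Finset.max' _ o2.ord A hAne with hM
  obtain ⟨β', hβ', hMeq⟩ := Finset.mem_image.mp (@Finset.max'_mem _ o2.ord A hAne)
  rw [← hM] at hMeq
  have hco : (p * v j).coeff (β' + τ) = p.coeff β' * (v j).coeff τ := by
    rw [MvPolynomial.coeff_mul]
    refine Finset.sum_eq_single_of_mem (β', τ) (Finset.HasAntidiagonal.mem_antidiagonal.mpr rfl) ?_
    rintro ⟨c, d⟩ hmem hne
    have hcd : c + d = β' + τ := Finset.HasAntidiagonal.mem_antidiagonal.mp hmem
    by_cases hc : c ∈ p.support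
    · by_cases hd : d ∈ (v j).support
      · exfalso
        have hdT : o2.ord.le ((d, j) : MTerm n m) ((τ, j) : MTerm n m) :=
          hmemle _ (mem_msupport.mpr hd)
        have h1 : o2.ord.le (mtmul c ((d, j) : MTerm n m)) (mtmul c ((τ, j) : MTerm n m)) :=
          ord2_add_le o2 c hdT
        have h2 : o2.ord.le (mtmul c ((τ, j) : MTerm n m)) M :=
          @Finset.le_max' _ o2.ord A _ (Finset.mem_image_of_mem _ hc)
        have h3 : mtmul c ((d, j) : MTerm n m) = M := by
          rw [← hMeq]; show ((c + d, j) : MTerm n m) = _; rw [hcd]; rfl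
        have h4 : mtmul c ((τ, j) : MTerm n m) = M :=
          @le_antisymm _ o2.ord.toPartialOrder _ _ h2 (h3 ▸ h1)
        rw [← hMeq] at h4
        have h5 : c + τ = β' + τ := congrArg Prod.fst h4
        have hcβ : c = β' := add_right_cancel h5
        apply hne
        have hd' : d = τ := by
          apply add_left_cancel (a := β')
          rw [← hcβ] at hcd ⊢; exact hcd
        rw [hcβ, hd']
      · simp [MvPolynomial.notMem_support_iff.mp hd]
    · simp [MvPolynomial.notMem_support_iff.mp hc]
  have hMsup : M ∈ msupport (pmul p v) := by
    rw [← hMeq]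
    have : β' + τ ∈ (p * v j).support := by
      rw [MvPolynomial.mem_support_iff, hco]
      exact mul_ne_zero (MvPolynomial.mem_support_iff.mp hβ') hvT
    exact mem_msupport.mpr this
  have h5 : wbleM o2 ((mtmul α ((τ, j) : MTerm n m) : MTerm n m) : WithBot (MTerm n m))
      ((M : MTerm n m) : WithBot (MTerm n m)) :=
    (wbM_coe_iff o2).mpr (@Finset.le_max' _ o2.ord A _ (Finset.mem_image_of_mem _ hα))
  exact wbM_trans o2 h5 (wbM_le_max o2 hMsup)

lemma smul_upper (o2 : ModOrd n m) {t : PP n} {v : ModElem K n m} {T : MTerm n m}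
    (hT : lppMW o2 v = (T : WithBot (MTerm n m))) :
    wbleM o2 (lppMW o2 (smulPP t v)) ((mtmul t T : MTerm n m) : WithBot (MTerm n m)) := by
  classical
  refine wbM_max_le o2 ?_
  rintro ⟨γ, k⟩ hS
  have hγ : γ ∈ (monomial t (1 : K) * v k).support := mem_msupport.mp hS
  obtain ⟨c, hc, d, hd, rfl⟩ := Finset.mem_add.mp (MvPolynomial.support_mul _ _ hγ)
  have hmono : (monomial t (1 : K)).support = {t} := by
    rw [MvPolynomial.support_monomial]; simp
  have hct : c = t := by rw [hmono] at hc; exact Finset.mem_singleton.mp hc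
  subst hct
  have hdT : o2.ord.le ((d, k) : MTerm n m) T :=
    (wbM_coe_iff o2).mp (hT ▸ wbM_le_max o2 (mem_msupport.mpr hd))
  exact (wbM_coe_iff o2).mpr (ord2_add_le o2 c hdT)

lemma msupport_zero_case (o2 : ModOrd n m) {v : ModElem K n m}
    (h : lppMW o2 v = ⊥) (t : PP n) : lppMW o2 (smulPP t v) = ⊥ := by
  have hemp : msupport v = ∅ := (@Finset.max_eq_bot _ o2.ord _).mp h
  have hz : ∀ k, v k = 0 := by
    intro k
    by_contra hk
    obtain ⟨α, hα⟩ := MvPolynomial.support_nonempty.mpr hk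
    have : ((α, k) : MTerm n m) ∈ msupport v := mem_msupport.mpr hα
    simp [hemp] at this
  have hemp2 : msupport (smulPP t v) = ∅ := by
    rw [Finset.eq_empty_iff_forall_notMem]
    rintro ⟨γ, k⟩ hS
    have := mem_msupport.mp hS
    simp [smulPP, hz k] at this
  show @Finset.max _ o2.ord (msupport (smulPP t v)) = ⊥
  rw [hemp2]
  exact @Finset.max_empty _ o2.ord
end

/-- (Basic property of standard representations.) If `f^[u]` with `f ≠ 0`
has a standard representation w.r.t. a set `B` of labeled polynomials of `I`, then some
`q ∈ B` has `q.1 ≠ 0`, `lpp(q.1) ∣ lpp(f)` and `lpp(t·q.2) ⪯ lpp(u)`, where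
`t = lpp(f)/lpp(q.1)`. -/
theorem detachability_stmt15 {K : Type*} [Field K] {n m : ℕ}
    (o1 : MonOrd n) (o2 : ModOrd n m) (F : Fin m → MvPolynomial (Fin n) K)
    (B : Set (MvPolynomial (Fin n) K × ModElem K n m))
    (hlab : ∀ p ∈ B, p.1 = dotF p.2 F)
    (f : MvPolynomial (Fin n) K) (u : ModElem K n m)
    (hfu : f = dotF u F) (hf : f ≠ 0)
    (hrep : HasStdRep o1 o2 B f u) :
    ∃ p ∈ B, p.1 ≠ 0 ∧ lpp o1 p.1 ≤ lpp o1 f ∧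
      wbleM o2 (lppMW o2 (smulPP (lpp o1 f - lpp o1 p.1) p.2)) (lppMW o2 u) := by
  
  obtain ⟨s, p, q, hqB, hsum, hP, hMle⟩ := hrep
  obtain ⟨hfW, hfmem⟩ := lpp_spec o1 hf
  set L := lpp o1 f with hLdef
  have hsum' : MvPolynomial.coeff L (∑ i, p i * (q i).1) ≠ 0 := by
    rw [← hsum]; exact MvPolynomial.mem_support_iff.mp hfmem
  rw [MvPolynomial.coeff_sum] at hsum'
  obtain ⟨i, -, hi⟩ := Finset.exists_ne_zero_of_sum_ne_zero hsum'
  have hp0 : p i ≠ 0 := by intro h; rw [h] at hi; simp at hi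
  have hg0 : (q i).1 ≠ 0 := by intro h; rw [h] at hi; simp at hi
  have hLmem : L ∈ (p i * (q i).1).support := MvPolynomial.mem_support_iff.mpr hi
  have h1 : wbleP o1 (↑L) (lppW o1 (p i * (q i).1)) := wbP_le_max o1 hLmem
  have h2 : wbleP o1 (lppW o1 (p i * (q i).1)) (↑L) := by
    have := hP i; rwa [hfW] at this
  have h3 : lppW o1 (p i * (q i).1) = (L : WithBot (PP n)) := wbP_antisymm o1 h2 h1
  have h4 := lppW_mul o1 hp0 hg0
  have hL : L = lpp o1 (p i) + lpp o1 (q i).1 := (WithBot.coe_inj.mp (h3.symm.trans h4))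
  refine ⟨q i, hqB i, hg0, ?_, ?_⟩
  · rw [hL]; exact le_add_self
  · have ht : L - lpp o1 (q i).1 = lpp o1 (p i) := by
      rw [hL]; exact add_tsub_cancel_right _ _
    rw [ht]
    by_cases hv : lppMW o2 ((q i).2) = ⊥
    · rw [msupport_zero_case o2 hv _]; exact wbM_bot o2 _
    · obtain ⟨T, hT⟩ := WithBot.ne_bot_iff_exists.mp hv
      have step1 := smul_upper o2 (t := lpp o1 (p i)) hT.symm
      have step2 := key_pmul o2 (p := p i) hT.symm _ (lpp_spec o1 hp0).2
      exact wbM_trans o2 (wbM_trans o2 step1 step2) (hMle i)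
end
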